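/- arXiv:2311.04616 — 6 statements merged into one kernel-verified Lean document; each statement's English description precedes it below -/
import Mathlib

section
/- Let X and Y be real Banach spaces, let f : X → ℝ be convex and continuous, let Q ⊆ X be a nonempty closed convex set, let K ⊆ Y be a closed convex cone, and let G : X → Y be continuous and convex with respect to −K (i.e. for all x₁, x₂ ∈ X and t ∈ [0,1], t·G(x₁) + (1−t)·G(x₂) − G(t·x₁ + (1−t)·x₂) − K ⊆ −K). Assume that val(P) := inf { f(x) : x ∈ Q, G(x) ∈ K } is finite and that 0 ∈ int(G(Q) − K). Then: (i) there is no duality gap, i.e. val(P) = sup over y* ∈ K⁻ of inf over x ∈ Q of [ f(x) + y*(G(x)) ], where K⁻ = { y* ∈ Y* : y*(k) ≤ 0 for all k ∈ K } is the polar cone; (ii) a feasible point x₀ (x₀ ∈ Q and G(x₀) ∈ K) is optimal if and only if there exists a continuous linear functional y* ∈ Y* such that x₀ minimizes x ↦ f(x) + y*(G(x)) over Q, y* ∈ K⁻, and y*(G(x₀)) = 0; (iii) if x₀ is an optimal solution, the set of all y* ∈ Y* satisfying these conditions is nonempty and convex. -/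
/-!
Robinson–Ursescu: the graph of `(x, t) ↦ {y | x ∈ Q, f x ≤ t, G x - y ∈ K}` is closed and convex,
and `0` is interior to its range `G(Q) - K`. A Baire category argument followed by successive
approximation (as in the open mapping theorem) shows that every small perturbation `y` is then
reached from a bounded set of `(x, t)`. Hence the convex set of pairs `(y, t)` for which the
perturbed problem `G x - y ∈ K` has a feasible point of value `≤ t` contains some `(0, R)` in its
interior. Separating `(0, val P)` from that interior gives a hyperplane, which cannot be vertical
because the projection of the set to `Y` is a neighbourhood of `0`; its normalized slope is a
multiplier `y* ∈ K⁻` with `val P ≤ f x + y*(G x)` on `Q`. With weak duality this is (i), and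
(ii), (iii) follow by evaluating at the optimal point.
-/

open Set Filter Topology Pointwise

section General

variable {E F : Type*} [NormedAddCommGroup E] [NormedSpace ℝ E]
  [NormedAddCommGroup F] [NormedSpace ℝ F]

theorem exists_pos_smul_mem_of_mem_nhds_zero {U : Set F} (hU : U ∈ 𝓝 0) (y : F) :
    ∃ t : ℝ, 0 < t ∧ t • y ∈ U := by
  have hlim : Tendsto (fun t : ℝ => t • y) (𝓝[>] 0) (𝓝 0) := by
    have hcont : Continuous fun t : ℝ => t • y := continuous_id.smul continuous_const
    simpa using (hcont.tendsto 0).mono_left nhdsWithin_le_nhds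
  obtain ⟨t, htU, ht⟩ := ((hlim.eventually hU).and self_mem_nhdsWithin).exists
  exact ⟨t, ht, htU⟩

theorem ContinuousLinearMap.eq_zero_of_nonneg_of_mem_nhds_zero (φ : F →L[ℝ] ℝ) {U : Set F}
    (hU : U ∈ 𝓝 0) (hφ : ∀ y ∈ U, 0 ≤ φ y) : φ = 0 := by
  ext y
  obtain ⟨s, hs, hsy⟩ := exists_pos_smul_mem_of_mem_nhds_zero hU y
  obtain ⟨t, ht, hty⟩ := exists_pos_smul_mem_of_mem_nhds_zero hU (-y)
  have h₁ : 0 ≤ φ y := (mul_nonneg_iff_of_pos_left hs).1 (by simpa using hφ _ hsy)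
  have h₂ : 0 ≤ -φ y := (mul_nonneg_iff_of_pos_left ht).1 (by simpa using hφ _ hty)
  simp only [zero_apply]
  linarith

theorem Convex.sum_smul_mem_of_zero_mem {ι : Type*} {s : Set E} (hs : Convex ℝ s)
    (h0 : (0 : E) ∈ s) {t : Finset ι} {w : ι → ℝ} {z : ι → E} (hw₀ : ∀ i ∈ t, 0 ≤ w i)
    (hw₁ : ∑ i ∈ t, w i ≤ 1) (hz : ∀ i ∈ t, z i ∈ s) : ∑ i ∈ t, w i • z i ∈ s := by
  rcases (Finset.sum_nonneg hw₀).eq_or_lt with hzero | hpos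
  · rw [Finset.sum_eq_zero fun i hi => by
      rw [(Finset.sum_eq_zero_iff_of_nonneg hw₀).1 hzero.symm i hi, zero_smul]]
    exact h0
  · have : ∑ i ∈ t, w i • z i = (∑ i ∈ t, w i) • t.centerMass w z := by
      rw [Finset.centerMass, smul_smul, mul_inv_cancel₀ hpos.ne', one_smul]
    rw [this]
    exact hs.smul_mem_of_zero_mem h0 (hs.centerMass_mem hw₀ hpos hz) ⟨hpos.le, hw₁⟩

theorem exists_seq_norm_sub_sum_lt {A : Set F} {η : ℝ}
    (hA : ∀ w : F, ‖w‖ < η → ∃ a ∈ A, ‖w - a‖ < η / 2) {y : F} (hy : ‖y‖ < η / 2) :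
    ∃ a : ℕ → F, (∀ k, a k ∈ A) ∧
      ∀ m, ‖y - ∑ k ∈ Finset.range m, (2⁻¹ : ℝ) ^ (k + 1) • a k‖ < η / 2 * 2⁻¹ ^ m := by
  have hA_total : ∀ w : F, ∃ a, ‖w‖ < η → a ∈ A ∧ ‖w - a‖ < η / 2 := fun w =>
    (em (‖w‖ < η)).elim (fun h => (hA w h).imp fun _ ha _ => ha)
      (fun h => ⟨0, fun h' => (h h').elim⟩)
  choose q hq using hA_total
  have hpow (n : ℕ) : (2⁻¹ : ℝ) ^ n * 2 ^ n = 1 := by rw [← mul_pow]; norm_num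
  -- `r m` is the residual after `m` steps; step `m` approximates `2 ^ (m + 1) • r m` from `A`.
  let r : ℕ → F := fun m =>
    Nat.rec y (fun k rk => rk - (2⁻¹ : ℝ) ^ (k + 1) • q ((2 : ℝ) ^ (k + 1) • rk)) m
  let a : ℕ → F := fun k => q ((2 : ℝ) ^ (k + 1) • r k)
  have hr_succ (m : ℕ) : r (m + 1) = r m - (2⁻¹ : ℝ) ^ (m + 1) • a m := rfl
  have hr_eq (m : ℕ) : r m = y - ∑ k ∈ Finset.range m, (2⁻¹ : ℝ) ^ (k + 1) • a k := by
    induction m with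
    | zero => simp [r]
    | succ m ih => rw [hr_succ, ih, Finset.sum_range_succ, sub_sub]
  have hscaled {m : ℕ} (h : ‖r m‖ < η / 2 * 2⁻¹ ^ m) : ‖(2 : ℝ) ^ (m + 1) • r m‖ < η := by
    rw [norm_smul, Real.norm_of_nonneg (by positivity)]
    calc (2 : ℝ) ^ (m + 1) * ‖r m‖ < 2 ^ (m + 1) * (η / 2 * 2⁻¹ ^ m) := by gcongr
      _ = η * (2⁻¹ ^ m * 2 ^ m) := by ring
      _ = η := by rw [hpow, mul_one]
  have hr_lt (m : ℕ) : ‖r m‖ < η / 2 * 2⁻¹ ^ m := by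
    induction m with
    | zero => simpa [r] using hy
    | succ m ih =>
      have hstep : r (m + 1) = (2⁻¹ : ℝ) ^ (m + 1) • ((2 : ℝ) ^ (m + 1) • r m - a m) := by
        rw [hr_succ, smul_sub, smul_smul, hpow, one_smul]
      rw [hstep, norm_smul, Real.norm_of_nonneg (by positivity)]
      calc (2⁻¹ : ℝ) ^ (m + 1) * ‖(2 : ℝ) ^ (m + 1) • r m - a m‖
          < 2⁻¹ ^ (m + 1) * (η / 2) := by gcongr; exact (hq _ (hscaled ih)).2
        _ = η / 2 * 2⁻¹ ^ (m + 1) := by ring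
  exact ⟨a, fun k => (hq _ (hscaled (hr_lt k))).1, fun m => hr_eq m ▸ hr_lt m⟩

theorem exists_mem_of_forall_exists_approx [CompleteSpace E] {Γ : Set (E × F)}
    (hΓc : IsClosed Γ) (hΓv : Convex ℝ Γ) (h0 : (0 : E × F) ∈ Γ) {η : ℝ}
    (happrox : ∀ w : F, ‖w‖ < η → ∃ p ∈ Γ, ‖p.1‖ ≤ 1 ∧ ‖w - p.2‖ < η / 2)
    {y : F} (hy : ‖y‖ < η / 2) : ∃ x : E, ‖x‖ ≤ 1 ∧ (x, y) ∈ Γ := by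
  obtain ⟨a, ha, hlt⟩ := exists_seq_norm_sub_sum_lt (A := Prod.snd '' {p ∈ Γ | ‖p.1‖ ≤ 1})
    (fun w hw => let ⟨p, hp, hp1, hp2⟩ := happrox w hw; ⟨p.2, ⟨p, ⟨hp, hp1⟩, rfl⟩, hp2⟩) hy
  choose p hp hpa using ha
  have hweights : HasSum (fun k : ℕ => (2⁻¹ : ℝ) ^ (k + 1)) 1 := by
    simpa [pow_succ, div_eq_mul_inv, mul_comm] using hasSum_geometric_two' 1
  set S : ℕ → E × F := fun m => ∑ k ∈ Finset.range m, (2⁻¹ : ℝ) ^ (k + 1) • p k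
  have hbound (k : ℕ) : ‖(2⁻¹ : ℝ) ^ (k + 1) • (p k).1‖ ≤ (2⁻¹ : ℝ) ^ (k + 1) := by
    rw [norm_smul, Real.norm_of_nonneg (by positivity)]
    exact mul_le_of_le_one_right (by positivity) (hp k).2
  have hsum : Summable fun k => (2⁻¹ : ℝ) ^ (k + 1) • (p k).1 :=
    Summable.of_norm_bounded hweights.summable hbound
  have hfst : Tendsto (fun m => (S m).1) atTop (𝓝 (∑' k, (2⁻¹ : ℝ) ^ (k + 1) • (p k).1)) := by
    simpa [S, Prod.fst_sum] using hsum.hasSum.tendsto_sum_nat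
  have hsnd : Tendsto (fun m => (S m).2) atTop (𝓝 y) := by
    rw [tendsto_iff_norm_sub_tendsto_zero]
    refine squeeze_zero (g := fun m => η / 2 * 2⁻¹ ^ m) (fun _ => norm_nonneg _) (fun m => ?_) ?_
    · rw [norm_sub_rev]
      simpa [S, Prod.snd_sum, hpa] using (hlt m).le
    · simpa using (tendsto_pow_atTop_nhds_zero_of_lt_one (by norm_num : (0 : ℝ) ≤ 2⁻¹)
        (by norm_num)).const_mul (η / 2)
  refine ⟨_, tsum_of_norm_bounded hweights hbound, hΓc.mem_of_tendsto
    (hfst.prodMk_nhds hsnd) (Eventually.of_forall fun m => ?_)⟩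
  change S m ∈ Γ
  exact hΓv.sum_smul_mem_of_zero_mem h0 (fun k _ => by positivity)
    (sum_le_hasSum _ (fun k _ => by positivity) hweights) (fun k _ => (hp k).1)

theorem mem_nhds_zero_of_isClosed_of_convex [CompleteSpace F] {A : Set F} (hAc : IsClosed A)
    (hAv : Convex ℝ A) (h0 : (0 : F) ∈ A) (habs : ∀ y, ∃ r : ℝ, 0 < r ∧ r • y ∈ A) : A ∈ 𝓝 0 := by
  have hcover : ⋃ n : ℕ, ((n : ℝ) + 1) • A = univ := by
    refine eq_univ_of_forall fun y => ?_
    obtain ⟨r, hr, hry⟩ := habs y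
    obtain ⟨n, hn⟩ := exists_nat_gt r⁻¹
    have hn₁ : (0 : ℝ) < n + 1 := by positivity
    refine mem_iUnion.2 ⟨n, (mem_smul_set_iff_inv_smul_mem₀ hn₁.ne' _ _).2 ?_⟩
    have : ((n : ℝ) + 1)⁻¹ • y = (((n : ℝ) + 1)⁻¹ * r⁻¹) • (r • y) := by
      rw [smul_smul, mul_assoc, inv_mul_cancel₀ hr.ne', mul_one]
    rw [this]
    refine hAv.smul_mem_of_zero_mem h0 hry ⟨by positivity, ?_⟩
    rw [← mul_inv, inv_le_one₀ (by positivity)]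
    nlinarith [mul_inv_cancel₀ hr.ne']
  obtain ⟨n, z, hz⟩ := nonempty_interior_of_iUnion_of_closed
    (fun n : ℕ => hAc.smul_of_ne_zero (by positivity : (n : ℝ) + 1 ≠ 0)) hcover
  rw [interior_smul₀ (by positivity : (n : ℝ) + 1 ≠ 0)] at hz
  obtain ⟨z, hz, rfl⟩ := hz
  obtain ⟨r, hr, hrz⟩ := habs (-z)
  have hcombo := hAv.combo_interior_self_mem_interior hz hrz (a := r / (1 + r))
    (b := 1 / (1 + r)) (by positivity) (by positivity) (by field_simp; ring)
  have hzero : (r / (1 + r)) • z + (1 / (1 + r)) • r • -z = 0 := by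
    rw [smul_smul, smul_neg, ← sub_eq_add_neg, one_div_mul_eq_div, sub_self]
  rw [hzero] at hcombo
  exact mem_interior_iff_mem_nhds.1 hcombo

theorem exists_norm_le_one_of_zero_mem_interior_image_snd [CompleteSpace E] [CompleteSpace F]
    {Γ : Set (E × F)} (hΓc : IsClosed Γ) (hΓv : Convex ℝ Γ) (h0 : (0 : E × F) ∈ Γ)
    (hint : (0 : F) ∈ interior (Prod.snd '' Γ)) :
    ∃ ρ > 0, ∀ y : F, ‖y‖ < ρ → ∃ x : E, ‖x‖ ≤ 1 ∧ (x, y) ∈ Γ := by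
  set T := Prod.snd '' {p ∈ Γ | ‖p.1‖ ≤ 1}
  have hTv : Convex ℝ T := by
    rintro _ ⟨p, ⟨hp, hp1⟩, rfl⟩ _ ⟨q, ⟨hq, hq1⟩, rfl⟩ a b ha hb hab
    refine ⟨a • p + b • q, ⟨hΓv hp hq ha hb hab, ?_⟩, rfl⟩
    simpa using convex_closedBall (0 : E) 1 (mem_closedBall_zero_iff.2 hp1)
      (mem_closedBall_zero_iff.2 hq1) ha hb hab
  have habs (y : F) : ∃ r : ℝ, 0 < r ∧ r • y ∈ closure T := by
    obtain ⟨s, hs, p, hp, hpy⟩ :=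
      exists_pos_smul_mem_of_mem_nhds_zero (mem_interior_iff_mem_nhds.1 hint) y
    set c : ℝ := (1 + ‖p.1‖)⁻¹
    have hc : 0 < c := by positivity
    refine ⟨c * s, by positivity, subset_closure ⟨c • p, ⟨?_, ?_⟩, ?_⟩⟩
    · exact hΓv.smul_mem_of_zero_mem h0 hp ⟨hc.le, inv_le_one_of_one_le₀ (by simp)⟩
    · rw [Prod.smul_fst, norm_smul, Real.norm_of_nonneg hc.le, inv_mul_le_one₀ (by positivity)]
      linarith
    · rw [Prod.smul_snd, hpy, smul_smul]
  obtain ⟨η, hη, hball⟩ := Metric.mem_nhds_iff.1 (mem_nhds_zero_of_isClosed_of_convex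
    isClosed_closure hTv.closure (subset_closure ⟨0, ⟨h0, by simp⟩, rfl⟩) habs)
  refine ⟨η / 2, by positivity, fun y hy => exists_mem_of_forall_exists_approx hΓc hΓv h0
    (fun w hw => ?_) hy⟩
  obtain ⟨_, ⟨p, ⟨hp, hp1⟩, rfl⟩, hpw⟩ := Metric.mem_closure_iff.1
    (hball (mem_ball_zero_iff.2 hw)) (η / 2) (by positivity)
  exact ⟨p, hp, hp1, by rwa [← dist_eq_norm]⟩

/-- The Robinson–Ursescu theorem, in the form of a bounded right inverse near an interior point of
the range of a closed convex relation. -/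
theorem exists_norm_le_of_zero_mem_interior_image_snd [CompleteSpace E] [CompleteSpace F]
    {Γ : Set (E × F)} (hΓc : IsClosed Γ) (hΓv : Convex ℝ Γ)
    (hint : (0 : F) ∈ interior (Prod.snd '' Γ)) :
    ∃ ρ > 0, ∃ R, ∀ y : F, ‖y‖ < ρ → ∃ x : E, ‖x‖ ≤ R ∧ (x, y) ∈ Γ := by
  obtain ⟨⟨x₀, _⟩, hx₀, rfl⟩ := interior_subset hint
  set Γ' := (fun p => (x₀, (0 : F)) + p) ⁻¹' Γ
  have hsnd : Prod.snd '' Γ' = Prod.snd '' Γ := by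
    ext y
    constructor
    · rintro ⟨p, hp, rfl⟩
      exact ⟨_, hp, by simp⟩
    · rintro ⟨p, hp, rfl⟩
      exact ⟨p - (x₀, 0), by simpa [Γ'] using hp, by simp⟩
  obtain ⟨ρ, hρ, h⟩ := exists_norm_le_one_of_zero_mem_interior_image_snd
    (hΓc.preimage (continuous_const.add continuous_id)) (hΓv.translate_preimage_right _)
    (by simpa [Γ'] using hx₀) (hsnd ▸ hint)
  refine ⟨ρ, hρ, 1 + ‖x₀‖, fun y hy => ?_⟩
  obtain ⟨x, hx, hxy⟩ := h y hy
  refine ⟨x₀ + x, ?_, by simpa [Γ'] using hxy⟩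
  linarith [norm_add_le x₀ x]

/-- `ℓ` is the normalized slope of a supporting hyperplane to `C` at `(0, v)`; the hyperplane is
not vertical because the projection of `interior C` to `F` is a neighbourhood of `0`. -/
theorem exists_dual_le_of_mem_interior {C : Set (F × ℝ)} (hC : Convex ℝ C) {R v : ℝ}
    (hR : ((0 : F), R) ∈ interior C) (hup : ∀ y t s, (y, t) ∈ C → t ≤ s → (y, s) ∈ C)
    (hv : ∀ t, ((0 : F), t) ∈ C → v ≤ t) :
    ∃ ℓ : F →L[ℝ] ℝ, ∀ q ∈ C, v ≤ q.2 + ℓ q.1 := by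
  have hvC : ((0 : F), v) ∉ interior C := by
    intro h
    have hnhds : ∀ᶠ t in 𝓝 v, ((0 : F), t) ∈ C :=
      (continuous_const.prodMk continuous_id).continuousAt.preimage_mem_nhds
        (mem_interior_iff_mem_nhds.1 h)
    obtain ⟨t, htC, htv⟩ :=
      ((hnhds.filter_mono nhdsWithin_le_nhds).and (self_mem_nhdsWithin (s := Iio v))).exists
    exact (hv t htC).not_gt htv
  obtain ⟨L, hL⟩ := geometric_hahn_banach_point_open hC.interior isOpen_interior hvC
  have hLC : ∀ q ∈ C, L (0, v) ≤ L q := by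
    have hcl : closure (interior C) ⊆ {q | L (0, v) ≤ L q} :=
      closure_minimal (fun q hq => (hL q hq).le) (isClosed_le continuous_const L.continuous)
    rw [hC.closure_interior_eq_closure_of_nonempty_interior ⟨_, hR⟩] at hcl
    exact fun q hq => hcl (subset_closure hq)
  set φ : F →L[ℝ] ℝ := L.comp (ContinuousLinearMap.inl ℝ F ℝ)
  set c : ℝ := L (0, 1)
  have hL_apply (q : F × ℝ) : L q = φ q.1 + q.2 * c := by
    calc L q = L ((q.1, 0) + q.2 • ((0 : F), (1 : ℝ))) := by congr 1; ext <;> simp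
      _ = φ q.1 + q.2 * c := by rw [map_add, map_smul, smul_eq_mul]; rfl
  have hkey : ∀ q ∈ C, v * c ≤ φ q.1 + q.2 * c := fun q hq => by
    simpa [hL_apply] using hLC q hq
  have hc0 : 0 ≤ c := by
    by_contra! hc
    have := hkey _ (hup 0 R (max R v + 1) (interior_subset hR) (by linarith [le_max_left R v]))
    simp only [map_zero, zero_add] at this
    nlinarith [le_max_right R v]
  have hc : 0 < c := by
    refine hc0.lt_of_ne' fun hc => ?_
    have hφ : φ = 0 := φ.eq_zero_of_nonneg_of_mem_nhds_zero
      ((isOpenMap_fst _ isOpen_interior).mem_nhds ⟨_, hR, rfl⟩)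
      (by rintro _ ⟨q, hq, rfl⟩; simpa [hc] using hkey q (interior_subset hq))
    simpa [hL_apply, hφ, hc] using hL _ hR
  refine ⟨c⁻¹ • φ, fun q hq => ?_⟩
  have : v - q.2 ≤ c⁻¹ * φ q.1 := (le_inv_mul_iff₀ hc).2 (by linarith [hkey q hq])
  rw [smul_apply, smul_eq_mul]
  linarith

theorem ContinuousLinearMap.nonpos_of_le_on_cone {K : Set F}
    (hK : ∀ w ∈ K, ∀ t : ℝ, 0 ≤ t → t • w ∈ K)
    (ℓ : F →L[ℝ] ℝ) {c : ℝ} (hc : ∀ w ∈ K, ℓ w ≤ c) : ∀ w ∈ K, ℓ w ≤ 0 := by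
  intro w hw
  by_contra! hpos
  obtain ⟨n, hn⟩ := exists_nat_gt (c / ℓ w)
  have := hc _ (hK w hw n n.cast_nonneg)
  rw [map_smul, smul_eq_mul] at this
  rw [div_lt_iff₀ hpos] at hn
  linarith

end General

def perturbationGraph {X Y : Type*} [Sub Y] (f : X → ℝ) (Q : Set X) (K : Set Y) (G : X → Y) :
    Set ((X × ℝ) × Y) :=
  {p | p.1.1 ∈ Q ∧ f p.1.1 ≤ p.1.2 ∧ G p.1.1 - p.2 ∈ K}

/-- The epigraph of the optimal value of the perturbed problem `min f` over `Q` subject to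
`G x - y ∈ K` (without taking the infimum, so not closed in general). -/
def perturbationEpigraph {X Y : Type*} [Sub Y] (f : X → ℝ) (Q : Set X) (K : Set Y) (G : X → Y) :
    Set (Y × ℝ) :=
  {q | ∃ x ∈ Q, f x ≤ q.2 ∧ G x - q.1 ∈ K}

section Perturbation

variable {X Y : Type*} {f : X → ℝ} {Q : Set X} {K : Set Y} {G : X → Y}

theorem convex_perturbationGraph [AddCommGroup X] [Module ℝ X] [AddCommGroup Y] [Module ℝ Y]
    (hf : ConvexOn ℝ univ f) (hQ : Convex ℝ Q) (hK : Convex ℝ K)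
    (hG : ∀ x₁ x₂ : X, ∀ t : ℝ, t ∈ Icc (0 : ℝ) 1 → ∀ κ ∈ K,
      -(t • G x₁ + (1 - t) • G x₂ - G (t • x₁ + (1 - t) • x₂) - κ) ∈ K) :
    Convex ℝ (perturbationGraph f Q K G) := by
  rintro ⟨⟨x₁, t₁⟩, y₁⟩ ⟨hx₁, hf₁, hK₁⟩ ⟨⟨x₂, t₂⟩, y₂⟩ ⟨hx₂, hf₂, hK₂⟩ a b ha hb hab
  obtain rfl : b = 1 - a := by linarith
  refine ⟨hQ hx₁ hx₂ ha hb hab, ?_, ?_⟩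
  · calc f (a • x₁ + (1 - a) • x₂) ≤ a • f x₁ + (1 - a) • f x₂ := hf.2 trivial trivial ha hb hab
      _ ≤ a • t₁ + (1 - a) • t₂ := by gcongr
  · show G (a • x₁ + (1 - a) • x₂) - (a • y₁ + (1 - a) • y₂) ∈ K
    convert hG x₁ x₂ a ⟨ha, by linarith⟩ _ (hK hK₁ hK₂ ha hb hab) using 1
    module

theorem convex_perturbationEpigraph [AddCommGroup X] [Module ℝ X] [AddCommGroup Y] [Module ℝ Y]
    (hf : ConvexOn ℝ univ f) (hQ : Convex ℝ Q) (hK : Convex ℝ K)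
    (hG : ∀ x₁ x₂ : X, ∀ t : ℝ, t ∈ Icc (0 : ℝ) 1 → ∀ κ ∈ K,
      -(t • G x₁ + (1 - t) • G x₂ - G (t • x₁ + (1 - t) • x₂) - κ) ∈ K) :
    Convex ℝ (perturbationEpigraph f Q K G) := by
  rintro ⟨y₁, t₁⟩ ⟨x₁, h₁⟩ ⟨y₂, t₂⟩ ⟨x₂, h₂⟩ a b ha hb hab
  obtain ⟨hx, hfx, hGx⟩ := convex_perturbationGraph hf hQ hK hG
    (x := ((x₁, t₁), y₁)) h₁ (y := ((x₂, t₂), y₂)) h₂ ha hb hab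
  exact ⟨_, hx, hfx, hGx⟩

theorem isClosed_perturbationGraph [TopologicalSpace X] [TopologicalSpace Y] [Sub Y]
    [ContinuousSub Y] (hf : Continuous f) (hQ : IsClosed Q) (hK : IsClosed K)
    (hG : Continuous G) : IsClosed (perturbationGraph f Q K G) :=
  (hQ.preimage (continuous_fst.comp continuous_fst)).inter
    ((isClosed_le (hf.comp (continuous_fst.comp continuous_fst))
      (continuous_snd.comp continuous_fst)).inter
      (hK.preimage ((hG.comp (continuous_fst.comp continuous_fst)).sub continuous_snd)))

theorem iInf_lagrangian_le_iInf [NormedAddCommGroup Y] [NormedSpace ℝ Y] {y : Y →L[ℝ] ℝ}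
    (hy : ∀ w ∈ K, y w ≤ 0) :
    ⨅ (x : X) (_ : x ∈ Q), ((f x + y (G x) : ℝ) : EReal) ≤
      ⨅ (x : X) (_ : x ∈ Q ∧ G x ∈ K), (f x : EReal) :=
  le_iInf₂ fun x hx => (iInf₂_le x hx.1).trans (EReal.coe_le_coe (by linarith [hy _ hx.2]))

theorem convex_setOf_lagrangeMultiplier [NormedAddCommGroup Y] [NormedSpace ℝ Y] (x₀ : X) :
    Convex ℝ {y : Y →L[ℝ] ℝ | (∀ x ∈ Q, f x₀ + y (G x₀) ≤ f x + y (G x)) ∧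
      (∀ w ∈ K, y w ≤ 0) ∧ y (G x₀) = 0} := by
  rintro y₁ ⟨hmin₁, hK₁, h₁⟩ y₂ ⟨hmin₂, hK₂, h₂⟩ a b ha hb hab
  obtain rfl : b = 1 - a := by linarith
  simp only [mem_ofPred_eq, add_apply, smul_apply, smul_eq_mul]
  refine ⟨fun x hx => ?_, fun w hw => ?_, by rw [h₁, h₂]; ring⟩
  · nlinarith [mul_le_mul_of_nonneg_left (hmin₁ x hx) ha,
      mul_le_mul_of_nonneg_left (hmin₂ x hx) hb]
  · nlinarith [mul_le_mul_of_nonneg_left (hK₁ w hw) ha, mul_le_mul_of_nonneg_left (hK₂ w hw) hb]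

theorem optimal_iff_exists_lagrangeMultiplier [NormedAddCommGroup Y] [NormedSpace ℝ Y] {v : ℝ}
    (hv : ⨅ (x : X) (_ : x ∈ Q ∧ G x ∈ K), (f x : EReal) = v) {ℓ : Y →L[ℝ] ℝ}
    (hℓK : ∀ w ∈ K, ℓ w ≤ 0) (hℓQ : ∀ x ∈ Q, v ≤ f x + ℓ (G x)) {x₀ : X} (hx₀ : x₀ ∈ Q)
    (hGx₀ : G x₀ ∈ K) :
    (∀ x ∈ Q, G x ∈ K → f x₀ ≤ f x) ↔ ∃ y : Y →L[ℝ] ℝ,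
      (∀ x ∈ Q, f x₀ + y (G x₀) ≤ f x + y (G x)) ∧ (∀ w ∈ K, y w ≤ 0) ∧ y (G x₀) = 0 := by
  constructor
  · intro hopt
    have hfx₀ : (f x₀ : EReal) ≤ v := hv ▸ le_iInf₂ fun x hx => EReal.coe_le_coe (hopt x hx.1 hx.2)
    have hfx₀ : f x₀ ≤ v := by exact_mod_cast hfx₀
    have hℓx₀ : ℓ (G x₀) = 0 := le_antisymm (hℓK _ hGx₀) (by linarith [hℓQ x₀ hx₀])
    exact ⟨ℓ, fun x hx => by linarith [hℓQ x hx], hℓK, hℓx₀⟩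
  · rintro ⟨y, hmin, hyK, hy₀⟩ x hx hGx
    linarith [hmin x hx, hyK _ hGx]

variable [NormedAddCommGroup X] [NormedSpace ℝ X] [CompleteSpace X]
  [NormedAddCommGroup Y] [NormedSpace ℝ Y] [CompleteSpace Y]

theorem exists_mem_interior_perturbationEpigraph
    (hfconv : ConvexOn ℝ univ f) (hfcont : Continuous f) (hQclosed : IsClosed Q)
    (hQconv : Convex ℝ Q) (hKclosed : IsClosed K) (hKconv : Convex ℝ K) (hGcont : Continuous G)
    (hGconv : ∀ x₁ x₂ : X, ∀ t : ℝ, t ∈ Icc (0 : ℝ) 1 → ∀ κ ∈ K,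
      -(t • G x₁ + (1 - t) • G x₂ - G (t • x₁ + (1 - t) • x₂) - κ) ∈ K)
    (hint : (0 : Y) ∈ interior {y : Y | ∃ x ∈ Q, ∃ κ ∈ K, y = G x - κ}) :
    ∃ R : ℝ, ((0 : Y), R) ∈ interior (perturbationEpigraph f Q K G) := by
  have hsub : {y : Y | ∃ x ∈ Q, ∃ κ ∈ K, y = G x - κ} ⊆
      Prod.snd '' perturbationGraph f Q K G := by
    rintro _ ⟨x, hx, κ, hκ, rfl⟩
    exact ⟨((x, f x), G x - κ), ⟨hx, le_rfl, by simpa⟩, rfl⟩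
  have hclosed := isClosed_perturbationGraph hfcont hQclosed hKclosed hGcont
  have hconvex := convex_perturbationGraph hfconv hQconv hKconv hGconv
  obtain ⟨ρ, hρ, R, hR⟩ :=
    exists_norm_le_of_zero_mem_interior_image_snd hclosed hconvex (interior_mono hsub hint)
  refine ⟨R + 1, interior_maximal (t := Metric.ball (0 : Y) ρ ×ˢ Ioi R) ?_
    (Metric.isOpen_ball.prod isOpen_Ioi) ⟨Metric.mem_ball_self hρ, lt_add_one R⟩⟩
  rintro ⟨y, t⟩ ⟨hy, ht⟩
  obtain ⟨⟨x, s⟩, hxs, hx, hfx, hGx⟩ := hR y (mem_ball_zero_iff.1 hy)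
  have hs : s ≤ R := (Real.le_norm_self s).trans ((norm_snd_le (x, s)).trans hxs)
  exact ⟨x, hx, hfx.trans (hs.trans ht.le), hGx⟩

theorem exists_lagrangeMultiplier
    (hfconv : ConvexOn ℝ univ f) (hfcont : Continuous f) (hQclosed : IsClosed Q)
    (hQconv : Convex ℝ Q) (hKclosed : IsClosed K) (hKconv : Convex ℝ K)
    (hKcone : ∀ w ∈ K, ∀ t : ℝ, 0 ≤ t → t • w ∈ K) (hGcont : Continuous G)
    (hGconv : ∀ x₁ x₂ : X, ∀ t : ℝ, t ∈ Icc (0 : ℝ) 1 → ∀ κ ∈ K,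
      -(t • G x₁ + (1 - t) • G x₂ - G (t • x₁ + (1 - t) • x₂) - κ) ∈ K)
    (hint : (0 : Y) ∈ interior {y : Y | ∃ x ∈ Q, ∃ κ ∈ K, y = G x - κ})
    {v : ℝ} (hv : ∀ x ∈ Q, G x ∈ K → v ≤ f x) :
    ∃ ℓ : Y →L[ℝ] ℝ, (∀ w ∈ K, ℓ w ≤ 0) ∧ ∀ x ∈ Q, v ≤ f x + ℓ (G x) := by
  obtain ⟨R, hR⟩ := exists_mem_interior_perturbationEpigraph hfconv hfcont hQclosed hQconv
    hKclosed hKconv hGcont hGconv hint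
  obtain ⟨ℓ, hℓ⟩ := exists_dual_le_of_mem_interior
    (convex_perturbationEpigraph hfconv hQconv hKconv hGconv) hR
    (fun _ _ _ ⟨x, hx, hfx, hGx⟩ hts => ⟨x, hx, hfx.trans hts, hGx⟩)
    (fun _ ⟨x, hx, hfx, hGx⟩ => (hv x hx (by simpa using hGx)).trans hfx)
  have hlagr : ∀ x ∈ Q, ∀ κ ∈ K, v ≤ f x + ℓ (G x) - ℓ κ := fun x hx κ hκ => by
    simpa [← map_sub, add_sub_assoc] using hℓ (G x - κ, f x) ⟨x, hx, le_rfl, by simpa⟩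
  obtain ⟨x₁, hx₁, κ₁, hκ₁, -⟩ := interior_subset hint
  have hK0 : (0 : Y) ∈ K := by simpa using hKcone κ₁ hκ₁ 0 le_rfl
  refine ⟨ℓ, ℓ.nonpos_of_le_on_cone hKcone (c := f x₁ + ℓ (G x₁) - v) fun w hw => ?_,
    fun x hx => by simpa using hlagr x hx 0 hK0⟩
  linarith [hlagr x₁ hx₁ w hw]

end Perturbation

theorem duality_no_gap_and_optimality_general
    {X Y : Type*} [NormedAddCommGroup X] [NormedSpace ℝ X] [CompleteSpace X]
    [NormedAddCommGroup Y] [NormedSpace ℝ Y] [CompleteSpace Y]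
    (f : X → ℝ) (hfconv : ConvexOn ℝ Set.univ f) (hfcont : Continuous f)
    (Q : Set X) (hQclosed : IsClosed Q) (hQconv : Convex ℝ Q)
    (K : Set Y) (hKclosed : IsClosed K) (hKconv : Convex ℝ K)
    (hKcone : ∀ w ∈ K, ∀ t : ℝ, 0 ≤ t → t • w ∈ K)
    (G : X → Y) (hGcont : Continuous G)
    (hGconv : ∀ x₁ x₂ : X, ∀ t : ℝ, t ∈ Set.Icc (0 : ℝ) 1 → ∀ κ ∈ K,
      -(t • G x₁ + (1 - t) • G x₂ - G (t • x₁ + (1 - t) • x₂) - κ) ∈ K)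
    (hfin : ∃ v : ℝ, (⨅ (x : X) (_ : x ∈ Q ∧ G x ∈ K), (f x : EReal)) = (v : EReal))
    (hint : (0 : Y) ∈ interior {y : Y | ∃ x ∈ Q, ∃ κ ∈ K, y = G x - κ}) :
    -- (i) no duality gap
    ((⨅ (x : X) (_ : x ∈ Q ∧ G x ∈ K), (f x : EReal)) =
        ⨆ (y : Y →L[ℝ] ℝ) (_ : ∀ w ∈ K, y w ≤ 0),
          ⨅ (x : X) (_ : x ∈ Q), ((f x + y (G x) : ℝ) : EReal)) ∧
    -- (ii) a feasible point is optimal iff a Lagrange multiplier exists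
    (∀ x₀ : X, x₀ ∈ Q → G x₀ ∈ K →
      ((∀ x ∈ Q, G x ∈ K → f x₀ ≤ f x) ↔
        ∃ y : Y →L[ℝ] ℝ,
          (∀ x ∈ Q, f x₀ + y (G x₀) ≤ f x + y (G x)) ∧
          (∀ w ∈ K, y w ≤ 0) ∧ y (G x₀) = 0)) ∧
    -- (iii) for an optimal solution the multiplier set is nonempty and convex
    (∀ x₀ : X, x₀ ∈ Q → G x₀ ∈ K → (∀ x ∈ Q, G x ∈ K → f x₀ ≤ f x) →
      {y : Y →L[ℝ] ℝ |
          (∀ x ∈ Q, f x₀ + y (G x₀) ≤ f x + y (G x)) ∧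
          (∀ w ∈ K, y w ≤ 0) ∧ y (G x₀) = 0}.Nonempty ∧
      Convex ℝ {y : Y →L[ℝ] ℝ |
          (∀ x ∈ Q, f x₀ + y (G x₀) ≤ f x + y (G x)) ∧
          (∀ w ∈ K, y w ≤ 0) ∧ y (G x₀) = 0}) := by
  obtain ⟨v, hv⟩ := hfin
  have hvle : ∀ x ∈ Q, G x ∈ K → v ≤ f x := fun x hx hGx => by
    have h : (v : EReal) ≤ f x := hv ▸ iInf₂_le x ⟨hx, hGx⟩
    exact_mod_cast h
  obtain ⟨ℓ, hℓK, hℓQ⟩ := exists_lagrangeMultiplier hfconv hfcont hQclosed hQconv hKclosed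
    hKconv hKcone hGcont hGconv hint hvle
  have hoptimal := fun x₀ (hx₀ : x₀ ∈ Q) (hGx₀ : G x₀ ∈ K) =>
    optimal_iff_exists_lagrangeMultiplier hv hℓK hℓQ hx₀ hGx₀
  refine ⟨?_, hoptimal, fun x₀ hx₀ hGx₀ hopt =>
    ⟨(hoptimal x₀ hx₀ hGx₀).1 hopt, convex_setOf_lagrangeMultiplier x₀⟩⟩
  refine le_antisymm ?_ (iSup₂_le fun y hy => iInf_lagrangian_le_iInf hy)
  rw [hv]
  exact le_iSup₂_of_le ℓ hℓK (le_iInf₂ fun x hx => EReal.coe_le_coe (hℓQ x hx))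

/-- Theorem on duality for the convex constrained problem
`min f(x)` over `x ∈ Q` subject to `G(x) ∈ K`. Under convexity, continuity,
finiteness of the optimal value and the interior-point condition
`0 ∈ int (G(Q) - K)`, one has: (i) no duality gap, (ii) a feasible point is
optimal iff a Lagrange multiplier exists, and (iii) for an optimal solution the
multiplier set is nonempty and convex. -/
theorem duality_no_gap_and_optimality
    {X Y : Type*} [NormedAddCommGroup X] [NormedSpace ℝ X] [CompleteSpace X]
    [NormedAddCommGroup Y] [NormedSpace ℝ Y] [CompleteSpace Y]
    (f : X → ℝ) (hfconv : ConvexOn ℝ Set.univ f) (hfcont : Continuous f)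
    (Q : Set X) (hQne : Q.Nonempty) (hQclosed : IsClosed Q) (hQconv : Convex ℝ Q)
    (K : Set Y) (hKclosed : IsClosed K) (hKconv : Convex ℝ K)
    (hKcone : ∀ w ∈ K, ∀ t : ℝ, 0 ≤ t → t • w ∈ K)
    (G : X → Y) (hGcont : Continuous G)
    (hGconv : ∀ x₁ x₂ : X, ∀ t : ℝ, t ∈ Set.Icc (0 : ℝ) 1 → ∀ κ ∈ K,
      -(t • G x₁ + (1 - t) • G x₂ - G (t • x₁ + (1 - t) • x₂) - κ) ∈ K)
    (hfin : ∃ v : ℝ, (⨅ (x : X) (_ : x ∈ Q ∧ G x ∈ K), (f x : EReal)) = (v : EReal))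
    (hint : (0 : Y) ∈ interior {y : Y | ∃ x ∈ Q, ∃ κ ∈ K, y = G x - κ}) :
    -- (i) no duality gap
    ((⨅ (x : X) (_ : x ∈ Q ∧ G x ∈ K), (f x : EReal)) =
        ⨆ (y : Y →L[ℝ] ℝ) (_ : ∀ w ∈ K, y w ≤ 0),
          ⨅ (x : X) (_ : x ∈ Q), ((f x + y (G x) : ℝ) : EReal)) ∧
    -- (ii) a feasible point is optimal iff a Lagrange multiplier exists
    (∀ x₀ : X, x₀ ∈ Q → G x₀ ∈ K →
      ((∀ x ∈ Q, G x ∈ K → f x₀ ≤ f x) ↔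
        ∃ y : Y →L[ℝ] ℝ,
          (∀ x ∈ Q, f x₀ + y (G x₀) ≤ f x + y (G x)) ∧
          (∀ w ∈ K, y w ≤ 0) ∧ y (G x₀) = 0)) ∧
    -- (iii) for an optimal solution the multiplier set is nonempty and convex
    (∀ x₀ : X, x₀ ∈ Q → G x₀ ∈ K → (∀ x ∈ Q, G x ∈ K → f x₀ ≤ f x) →
      {y : Y →L[ℝ] ℝ |
          (∀ x ∈ Q, f x₀ + y (G x₀) ≤ f x + y (G x)) ∧
          (∀ w ∈ K, y w ≤ 0) ∧ y (G x₀) = 0}.Nonempty ∧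
      Convex ℝ {y : Y →L[ℝ] ℝ |
          (∀ x ∈ Q, f x₀ + y (G x₀) ≤ f x + y (G x)) ∧
          (∀ w ∈ K, y w ≤ 0) ∧ y (G x₀) = 0}) :=
  duality_no_gap_and_optimality_general f hfconv hfcont Q hQclosed hQconv K hKclosed hKconv hKcone G
    hGcont hGconv hfin hint
end

section
/- Let X and Y be real Banach spaces, let Q ⊆ X be a closed convex set, let K ⊆ Y be a closed convex set, and let f : X → ℝ and G : X → Y be continuous on Q and Fréchet differentiable at a point x₀ ∈ Q with G(x₀) ∈ K. Assume x₀ is regular, i.e. 0 ∈ int( G(x₀) + DG(x₀)[Q − x₀] − K ), where int(A) is the set of all y ∈ A such that for every y₁ ∈ Y one has y + t·y₁ ∈ A for all sufficiently small t > 0. If x₀ is a local minimum point of f over the feasible set { x ∈ Q : G(x) ∈ K }, then Df(x₀)[h] ≥ 0 for every h in the first order tangent set T_{Q ∩ G⁻¹(K)}(x₀). -/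
/-!
A first order tangent direction `h` to the feasible set is realised by feasible points
`x₀ + t h + o(t)` along every sequence `t ↓ 0`, so `h` lies in Mathlib's positive tangent cone
of the feasible set at `x₀`. Fermat's rule for a local minimum on a set then gives
`Df(x₀)[h] ≥ 0`.
-/

section TangentSets

open Filter Topology

variable {E : Type*} [NormedAddCommGroup E] [NormedSpace ℝ E]

/-- The first order tangent set `T_s(x) = liminf_{t ↓ 0} (s - x) / t`. -/
def firstOrderTangentSet (s : Set E) (x : E) : Set E :=
  {h | ∀ ε > (0 : ℝ), ∃ δ > (0 : ℝ), ∀ t : ℝ, 0 < t → t < δ →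
    ∃ z : E, z ∈ s ∧ ‖t⁻¹ • (z - x) - h‖ < ε}

theorem mem_posTangentConeAt_of_tendsto_inv_smul {α : Type*} {l : Filter α} [l.NeBot]
    {s : Set E} {x y : E} {t : α → ℝ} {z : α → E} (ht_pos : ∀ n, 0 < t n)
    (ht : Tendsto t l (𝓝 0)) (hz : ∀ n, z n ∈ s)
    (hlim : Tendsto (fun n ↦ (t n)⁻¹ • (z n - x)) l (𝓝 y)) :
    y ∈ posTangentConeAt s x := by
  refine mem_tangentConeAt_of_seq l (fun n ↦ ⟨(t n)⁻¹, (inv_pos.2 (ht_pos n)).le⟩)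
    (fun n ↦ z n - x) ?_ (Eventually.of_forall fun n ↦ by simpa using hz n) ?_
  · have hd : ∀ n, z n - x = t n • ((t n)⁻¹ • (z n - x)) := fun n ↦ by
      rw [smul_smul, mul_inv_cancel₀ (ht_pos n).ne', one_smul]
    simpa [← hd] using ht.smul hlim
  · exact hlim

theorem firstOrderTangentSet_subset_posTangentConeAt (s : Set E) (x : E) :
    firstOrderTangentSet s x ⊆ posTangentConeAt s x := by
  intro h hh
  have hseq : ∀ n : ℕ, ∃ t : ℝ, (0 < t ∧ t < 1 / (n + 1)) ∧
      ∃ z : E, z ∈ s ∧ ‖t⁻¹ • (z - x) - h‖ < 1 / (n + 1) := fun n ↦ by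
    obtain ⟨δ, hδ, hT⟩ := hh (1 / (n + 1)) Nat.one_div_pos_of_nat
    have hη : 0 < min δ (1 / (n + 1)) := lt_min hδ Nat.one_div_pos_of_nat
    refine ⟨min δ (1 / (n + 1)) / 2, ⟨half_pos hη, ?_⟩, hT _ (half_pos hη) ?_⟩ <;>
      linarith [min_le_left δ (1 / (n + 1)), min_le_right δ (1 / (n + 1))]
  choose t ht z hz hzh using hseq
  refine mem_posTangentConeAt_of_tendsto_inv_smul (l := atTop) (fun n ↦ (ht n).1) ?_ hz ?_
  · exact squeeze_zero (fun n ↦ (ht n).1.le) (fun n ↦ (ht n).2.le)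
      tendsto_one_div_add_atTop_nhds_zero_nat
  · exact tendsto_iff_norm_sub_tendsto_zero.2 <| squeeze_zero (fun _ ↦ norm_nonneg _)
      (fun n ↦ (hzh n).le) tendsto_one_div_add_atTop_nhds_zero_nat

end TangentSets

open Set

theorem first_order_necessary_condition_general
    {X Y : Type*} [NormedAddCommGroup X] [NormedSpace ℝ X]
    (Q : Set X)
    (K : Set Y)
    (f : X → ℝ) (G : X → Y)
    (x₀ : X)
    (f' : X →L[ℝ] ℝ)
    (hf' : HasFDerivAt f f' x₀)
    -- x₀ is a local minimum point over the feasible set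
    (hmin : IsLocalMinOn f {x : X | x ∈ Q ∧ G x ∈ K} x₀) :
    ∀ h : X,
      (∀ ε > (0 : ℝ), ∃ δ > (0 : ℝ), ∀ t : ℝ, 0 < t → t < δ →
        ∃ x : X, (x ∈ Q ∧ G x ∈ K) ∧ ‖t⁻¹ • (x - x₀) - h‖ < ε) →
      0 ≤ f' h :=
  fun _ hT ↦ hmin.hasFDerivWithinAt_nonneg hf'.hasFDerivWithinAt
    (firstOrderTangentSet_subset_posTangentConeAt _ x₀ hT)

/-- first order necessary conditions, Cominetti / Molchanov–Zuyev.
If `x₀` is a regular point (Robinson constraint qualification, with `int` being the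
algebraic-type interior described in the statement) and a local minimum of `f` over
`{x ∈ Q : G x ∈ K}`, then `Df(x₀)[h] ≥ 0` for every `h` in the first order tangent
set to `Q ∩ G⁻¹(K)` at `x₀`. -/
theorem first_order_necessary_condition
    {X Y : Type*} [NormedAddCommGroup X] [NormedSpace ℝ X] [CompleteSpace X]
    [NormedAddCommGroup Y] [NormedSpace ℝ Y] [CompleteSpace Y]
    (Q : Set X) (hQclosed : IsClosed Q) (hQconv : Convex ℝ Q)
    (K : Set Y) (hKclosed : IsClosed K) (hKconv : Convex ℝ K)
    (f : X → ℝ) (G : X → Y)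
    (hfcont : ContinuousOn f Q) (hGcont : ContinuousOn G Q)
    (x₀ : X) (hx₀Q : x₀ ∈ Q) (hx₀K : G x₀ ∈ K)
    (f' : X →L[ℝ] ℝ) (G' : X →L[ℝ] Y)
    (hf' : HasFDerivAt f f' x₀) (hG' : HasFDerivAt G G' x₀)
    -- regularity of x₀ : `0 ∈ int (G(x₀) + DG(x₀)[Q - x₀] - K)`
    (hreg : (0 : Y) ∈ {y : Y |
      y ∈ {w : Y | ∃ z ∈ Q, ∃ κ ∈ K, w = G x₀ + G' (z - x₀) - κ} ∧
      ∀ y₁ : Y, ∃ δ > (0 : ℝ), ∀ t : ℝ, 0 < t → t < δ →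
        y + t • y₁ ∈ {w : Y | ∃ z ∈ Q, ∃ κ ∈ K, w = G x₀ + G' (z - x₀) - κ}})
    -- x₀ is a local minimum point over the feasible set
    (hmin : IsLocalMinOn f {x : X | x ∈ Q ∧ G x ∈ K} x₀) :
    ∀ h : X,
      (∀ ε > (0 : ℝ), ∃ δ > (0 : ℝ), ∀ t : ℝ, 0 < t → t < δ →
        ∃ x : X, (x ∈ Q ∧ G x ∈ K) ∧ ‖t⁻¹ • (x - x₀) - h‖ < ε) →
      0 ≤ f' h :=
  first_order_necessary_condition_general Q K f G x₀ f' hf' hmin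
end

section
/- Let μ ∈ M⁺(ℝ^m) be a finite nonnegative Borel measure. Then the first order tangent set to M⁺(ℝ^m) at μ, computed in the space M(ℝ^m) with the total variation norm, equals { h ∈ M(ℝ^m) : h⁻ ≪ μ }, where h = h⁺ − h⁻ is the Jordan decomposition of h and h⁻ ≪ μ means h⁻ is absolutely continuous with respect to μ. -/
open MeasureTheory
open scoped ENNReal

noncomputable section

abbrev E (m : ℕ) := EuclideanSpace ℝ (Fin m)

/-- Total variation norm of a signed measure. -/
def tvNorm {α : Type*} [MeasurableSpace α] (s : SignedMeasure α) : ℝ :=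
  (s.totalVariation Set.univ).toReal

open scoped Classical in
/-- The signed measure associated to a (finite) nonnegative measure. -/
def toSM {α : Type*} [MeasurableSpace α] (μ : Measure α) : SignedMeasure α :=
  if h : IsFiniteMeasure μ then @Measure.toSignedMeasure α _ μ h else 0

/-!
If `h⁻ ≪ μ` with density `f = dh⁻/dμ`, then `ν_t = μ + t • h⁺ - t • min(f, 1/t) • μ` is a
nonnegative measure and `(ν_t - μ)/t - h = (f - 1/t)⁺ • μ`, whose mass tends to `0` as `t ↓ 0`
by dominated convergence. Conversely, on a `μ`-null subset `B` of the negative Hahn set of `h`,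
`(ν - μ)/t - h ≥ -h = h⁻` for every `ν ≥ 0`, so `h⁻(B)` is bounded by the total variation of
`(ν - μ)/t - h`, which can be made arbitrarily small.
-/

open scoped NNReal
open Filter Topology

namespace MeasureTheory

variable {α : Type*} [MeasurableSpace α]

lemma toSM_eq_toSignedMeasure (μ : Measure α) [hμ : IsFiniteMeasure μ] :
    toSM μ = μ.toSignedMeasure := by
  simp [toSM, hμ]

lemma tvNorm_toSignedMeasure (μ : Measure α) [IsFiniteMeasure μ] :
    tvNorm μ.toSignedMeasure = μ.real Set.univ := by
  have : μ.toSignedMeasure.toJordanDecomposition = ⟨μ, 0, .zero_right⟩ :=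
    SignedMeasure.toJordanDecomposition_eq (by simp [JordanDecomposition.toSignedMeasure])
  simp [tvNorm, SignedMeasure.totalVariation, this, measureReal_def]

lemma SignedMeasure.abs_apply_le_tvNorm (s : SignedMeasure α) {B : Set α}
    (hB : MeasurableSet B) : |s B| ≤ tvNorm s := by
  rw [tvNorm, SignedMeasure.totalVariation, ← measureReal_def, measureReal_add_apply]
  conv_lhs => rw [← s.toSignedMeasure_toJordanDecomposition]
  set j := s.toJordanDecomposition
  rw [JordanDecomposition.toSignedMeasure, sub_apply,
    Measure.toSignedMeasure_apply_measurable hB, Measure.toSignedMeasure_apply_measurable hB,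
    abs_sub_le_iff]
  have hP := measureReal_mono (μ := j.posPart) (Set.subset_univ B)
  have hN := measureReal_mono (μ := j.negPart) (Set.subset_univ B)
  constructor <;> linarith [measureReal_nonneg (μ := j.posPart) (s := B),
    measureReal_nonneg (μ := j.negPart) (s := B)]

lemma SignedMeasure.negPart_real_le_tvNorm (h : SignedMeasure α) (μ ν : Measure α)
    [IsFiniteMeasure μ] [IsFiniteMeasure ν] {c : ℝ} (hc : 0 ≤ c) {A : Set α}
    (hA : MeasurableSet A) (hμA : μ A = 0) :
    h.toJordanDecomposition.negPart.real A ≤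
      tvNorm (c • (ν.toSignedMeasure - μ.toSignedMeasure) - h) := by
  obtain ⟨i, hi, -, hi_neg, -, hneg⟩ := h.toJordanDecomposition_spec
  set B := iᶜ ∩ A
  have hB : MeasurableSet B := hi.compl.inter hA
  have hμB : μ B = 0 := measure_mono_null Set.inter_subset_right hμA
  have hnegA : h.toJordanDecomposition.negPart.real A = -h B := by
    rw [measureReal_def, hneg, toMeasureOfLEZero_apply _ hi_neg hi.compl hA]
    rfl
  have hsB : (c • (ν.toSignedMeasure - μ.toSignedMeasure) - h) B = c * ν.real B - h B := by
    simp [Measure.toSignedMeasure_apply_measurable hB, measureReal_def, hμB]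
  calc h.toJordanDecomposition.negPart.real A
      ≤ c * ν.real B - h B := by
        rw [hnegA]
        linarith [mul_nonneg hc (measureReal_nonneg : 0 ≤ ν.real B)]
    _ ≤ |(c • (ν.toSignedMeasure - μ.toSignedMeasure) - h) B| := hsB ▸ le_abs_self _
    _ ≤ _ := abs_apply_le_tvNorm _ hB

/-- `μ + t • (P - N)`, with the density of `t • N` with respect to `μ` capped at `1` so that
the result stays nonnegative. -/
def Measure.perturbation (μ P N : Measure α) (t : ℝ≥0) : Measure α :=
  μ.withDensity (fun x => 1 - t * N.rnDeriv μ x) + t • P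

instance (μ P N : Measure α) [IsFiniteMeasure μ] [IsFiniteMeasure P] (t : ℝ≥0) :
    IsFiniteMeasure (μ.perturbation P N t) := by
  have : IsFiniteMeasure (μ.withDensity fun x => 1 - t * N.rnDeriv μ x) :=
    isFiniteMeasure_of_le μ <| calc
      _ ≤ μ.withDensity 1 := withDensity_mono (.of_forall fun _ => tsub_le_self)
      _ = μ := withDensity_one
  unfold Measure.perturbation
  infer_instance

def Measure.rnDerivExcess (N μ : Measure α) (c : ℝ≥0∞) : Measure α :=
  μ.withDensity fun x => N.rnDeriv μ x - c

instance (N μ : Measure α) [IsFiniteMeasure N] (c : ℝ≥0∞) :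
    IsFiniteMeasure (N.rnDerivExcess μ c) :=
  isFiniteMeasure_of_le N <| calc
    N.rnDerivExcess μ c ≤ μ.withDensity (N.rnDeriv μ) :=
      withDensity_mono (.of_forall fun _ => tsub_le_self)
    _ ≤ N := Measure.withDensity_rnDeriv_le N μ

lemma Measure.perturbation_add_smul {μ P N : Measure α} [N.HaveLebesgueDecomposition μ]
    (hNμ : N ≪ μ) {t : ℝ≥0} (ht : t ≠ 0) :
    μ.perturbation P N t + t • N =
      μ + t • P + t • N.rnDerivExcess μ (t : ℝ≥0∞)⁻¹ := by
  unfold Measure.perturbation Measure.rnDerivExcess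
  set f := N.rnDeriv μ
  have hf : Measurable f := N.measurable_rnDeriv μ
  have hsmul (g : α → ℝ≥0∞) : t • μ.withDensity g = μ.withDensity (fun x => t * g x) :=
    (withDensity_smul' (t : ℝ≥0∞) g ENNReal.coe_ne_top).symm
  have hdensity : (fun x => 1 - t * f x) + (fun x => t * f x) =
      1 + fun x => t * (f x - (t : ℝ≥0∞)⁻¹) := by
    ext x
    simp only [Pi.add_apply, Pi.one_apply]
    rw [ENNReal.mul_sub fun _ _ => ENNReal.coe_ne_top,
      ENNReal.mul_inv_cancel (by simpa) (by simp), tsub_add_eq_max, add_tsub_eq_max, max_comm]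
  conv_lhs => rw [← Measure.withDensity_rnDeriv_eq N μ hNμ]
  rw [hsmul, hsmul, add_right_comm, ← withDensity_add_right _ (hf.const_mul _), hdensity,
    withDensity_add_left measurable_one, withDensity_one, add_right_comm]

lemma Measure.smul_sub_perturbation_eq {μ P N : Measure α} [IsFiniteMeasure μ]
    [IsFiniteMeasure P] [IsFiniteMeasure N] (hNμ : N ≪ μ) {t : ℝ≥0} (ht : t ≠ 0) :
    (t : ℝ)⁻¹ • ((μ.perturbation P N t).toSignedMeasure - μ.toSignedMeasure) -
        (P.toSignedMeasure - N.toSignedMeasure) =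
      (N.rnDerivExcess μ (t : ℝ≥0∞)⁻¹).toSignedMeasure := by
  have key := Measure.toSignedMeasure_congr (perturbation_add_smul (P := P) hNμ ht)
  simp only [Measure.toSignedMeasure_add, Measure.toSignedMeasure_smul, NNReal.smul_def] at key
  have ht' : (t : ℝ) ≠ 0 := by exact_mod_cast ht
  apply smul_right_injective _ ht'
  simp only [smul_sub, smul_smul, mul_inv_cancel₀ ht', one_smul]
  linear_combination (norm := module) key

lemma tendsto_lintegral_tsub_ofReal_atTop {μ : Measure α} {f : α → ℝ≥0∞}
    (hf : AEMeasurable f μ) (hfi : ∫⁻ x, f x ∂μ ≠ ∞) :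
    Tendsto (fun c : ℝ => ∫⁻ x, f x - ENNReal.ofReal c ∂μ) atTop (𝓝 0) := by
  have hlim : ∀ᵐ x ∂μ, Tendsto (fun c : ℝ => f x - ENNReal.ofReal c) atTop (𝓝 0) := by
    filter_upwards [ae_lt_top' hf hfi] with x hx
    refine tendsto_const_nhds.congr' ?_
    filter_upwards [ENNReal.tendsto_ofReal_atTop.eventually (eventually_ge_nhds hx)] with c hc
    exact (tsub_eq_zero_of_le hc).symm
  simpa using tendsto_lintegral_filter_of_dominated_convergence' f
    (.of_forall fun _ => hf.sub aemeasurable_const)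
    (.of_forall fun _ => .of_forall fun _ => tsub_le_self) hfi hlim

lemma Measure.tendsto_tvNorm_perturbation {μ P N : Measure α} [IsFiniteMeasure μ]
    [IsFiniteMeasure P] [IsFiniteMeasure N] (hNμ : N ≪ μ) :
    Tendsto (fun t : ℝ => tvNorm (t⁻¹ • ((μ.perturbation P N t.toNNReal).toSignedMeasure -
        μ.toSignedMeasure) - (P.toSignedMeasure - N.toSignedMeasure))) (𝓝[>] 0) (𝓝 0) := by
  have hexcess : Tendsto (fun t : ℝ => (N.rnDerivExcess μ (ENNReal.ofReal t⁻¹)).real Set.univ)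
      (𝓝[>] 0) (𝓝 0) := by
    have hfi : ∫⁻ x, N.rnDeriv μ x ∂μ ≠ ∞ :=
      (Measure.lintegral_rnDeriv_le.trans_lt (measure_lt_top _ _)).ne
    have := (ENNReal.tendsto_toReal ENNReal.zero_ne_top).comp
      ((tendsto_lintegral_tsub_ofReal_atTop (N.measurable_rnDeriv μ).aemeasurable hfi).comp
        tendsto_inv_nhdsGT_zero)
    simpa [Function.comp_def, Measure.real, rnDerivExcess] using this
  refine hexcess.congr' ?_
  filter_upwards [self_mem_nhdsWithin] with t (ht : 0 < t)
  lift t to ℝ≥0 using ht.le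
  rw [Real.toNNReal_coe, smul_sub_perturbation_eq hNμ (by exact_mod_cast ht.ne'),
    tvNorm_toSignedMeasure, ENNReal.ofReal_inv_of_pos ht, ENNReal.ofReal_coe_nnreal]

end MeasureTheory

/-- Molchanov–Zuyev. The first order tangent set to the cone of finite
nonnegative Borel measures `M⁺(ℝ^m)` at `μ`, computed in the space of totally finite signed
Borel measures with the total variation norm, equals `{ h : h⁻ ≪ μ }`. -/
theorem tangentSet_nonneg_measures (m : ℕ)
    (μ : Measure (E m)) [IsFiniteMeasure μ] (h : SignedMeasure (E m)) :
    (∀ ε > (0 : ℝ), ∃ δ > (0 : ℝ), ∀ t : ℝ, 0 < t → t < δ →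
        ∃ ν : Measure (E m), IsFiniteMeasure ν ∧
          tvNorm (t⁻¹ • (toSM ν - toSM μ) - h) < ε) ↔
      h.toJordanDecomposition.negPart ≪ μ := by
  constructor
  · refine fun H => Measure.AbsolutelyContinuous.mk fun A hA hμA => ?_
    suffices h.toJordanDecomposition.negPart.real A ≤ 0 by
      exact (measureReal_eq_zero_iff (measure_ne_top _ _)).1 (this.antisymm measureReal_nonneg)
    refine le_of_forall_pos_le_add fun ε hε => ?_
    obtain ⟨δ, hδ, hνδ⟩ := H ε hε
    obtain ⟨ν, hν, hlt⟩ := hνδ (δ / 2) (by positivity) (by linarith)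
    rw [toSM_eq_toSignedMeasure, toSM_eq_toSignedMeasure] at hlt
    linarith [h.negPart_real_le_tvNorm μ ν (inv_nonneg.2 (half_pos hδ).le) hA hμA]
  · intro hNμ ε hε
    set J := h.toJordanDecomposition
    have hlim := μ.tendsto_tvNorm_perturbation (P := J.posPart) hNμ
    obtain ⟨δ, hδ, hsmall⟩ :=
      (nhdsGT_basis 0).eventually_iff.1 (hlim.eventually (gt_mem_nhds hε))
    refine ⟨δ, hδ, fun t ht htδ =>
      ⟨μ.perturbation J.posPart J.negPart t.toNNReal, inferInstance, ?_⟩⟩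
    rw [toSM_eq_toSignedMeasure, toSM_eq_toSignedMeasure, ← h.toSignedMeasure_toJordanDecomposition]
    exact hsmall ⟨ht, htδ⟩
end
end

section
/- Let A be a compact subset of ℝ^k, let q ∈ M_d⁺(ℝ^m) be a finite nonnegative Borel measure with finite d-th moment, and let f : ℝ^m × A → ℝ be such that x ↦ f(x,α) is Borel measurable for each α ∈ A, α ↦ f(x,α) is continuous for each x ∈ ℝ^m, and x ↦ sup_{α∈A} |f(x,α)| is q-integrable. Then ∫_{ℝ^m} min_{α∈A} f(x,α) dq(x) = min over all Borel measurable functions α : ℝ^m → A of ∫_{ℝ^m} f(x,α(x)) dq(x), and this minimum over measurable selections is attained; the same identity holds with max in place of min. -/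
/-!
A measurable minimizer is built by a Kuratowski–Ryll-Nardzewski bisection: along a dense
sequence `aⱼ`, at stage `n` one keeps the first closed ball of radius `2⁻ⁿ` that still meets the
argmin set. Whether a closed set meets the argmin set is decided by comparing two infima over
compact sets, and such an infimum equals the infimum over a countable dense subset, hence is
measurable in `x`. The centres of the chosen balls are countably-valued measurable functions
converging to a point of the argmin set. With a measurable argmin (and argmax) in hand, the
envelope makes every selection integrable, and the exchange identities are pointwise
inequalities integrated.
-/

open MeasureTheory Set
open scoped ENNReal

noncomputable section

abbrev Ctl (k : ℕ) := EuclideanSpace ℝ (Fin k)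

theorem IsMinOn.csInf_image_eq {Y β : Type*} [ConditionallyCompleteLattice β] {f : Y → β}
    {A : Set Y} {y : Y} (hy : y ∈ A) (h : IsMinOn f A y) : sInf (f '' A) = f y :=
  IsLeast.csInf_eq ⟨mem_image_of_mem f hy, forall_mem_image.2 (isMinOn_iff.1 h)⟩

theorem IsMaxOn.csSup_image_eq {Y β : Type*} [ConditionallyCompleteLattice β] {f : Y → β}
    {A : Set Y} {y : Y} (hy : y ∈ A) (h : IsMaxOn f A y) : sSup (f '' A) = f y :=
  IsGreatest.csSup_eq ⟨mem_image_of_mem f hy, forall_mem_image.2 (isMaxOn_iff.1 h)⟩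

theorem IsCompact.csInf_image_le_iff {Y : Type*} [TopologicalSpace Y] {K : Set Y}
    (hK : IsCompact K) (hKne : K.Nonempty) {g : Y → ℝ} (hg : ContinuousOn g K) (c : ℝ) :
    sInf (g '' K) ≤ c ↔ ∃ y ∈ K, g y ≤ c := by
  refine ⟨fun h => ?_, fun ⟨y, hy, hyc⟩ => ?_⟩
  · obtain ⟨y, hy, hyeq⟩ := (hK.image_of_continuousOn hg).sInf_mem (hKne.image g)
    exact ⟨y, hy, hyeq ▸ h⟩
  · exact csInf_le_of_le (hK.image_of_continuousOn hg).bddBelow (mem_image_of_mem g hy) hyc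

theorem measurable_nat_sInf {X : Type*} [MeasurableSpace X] {S : X → Set ℕ}
    (hS : ∀ j, MeasurableSet {x | j ∈ S x}) : Measurable fun x => sInf (S x) := by
  classical
  -- the disjunct `S x = ∅` makes `Nat.find` reproduce the junk value `sInf ∅ = 0`
  have hex : ∀ x, ∃ j, j ∈ S x ∨ S x = ∅ := fun x =>
    (S x).eq_empty_or_nonempty.elim (fun h => ⟨0, Or.inr h⟩) fun ⟨j, hj⟩ => ⟨j, Or.inl hj⟩
  have hfind : (fun x => sInf (S x)) = fun x => Nat.find (hex x) := by
    funext x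
    rcases (S x).eq_empty_or_nonempty with hx | hx
    · rw [(Nat.find_eq_zero (hex x)).2 (Or.inr hx), hx, Nat.sInf_empty]
    · rw [Nat.sInf_def hx]
      congr 1
      funext j
      simp [hx.ne_empty]
  have hempty : MeasurableSet {x | S x = ∅} := by
    simp only [eq_empty_iff_forall_notMem, ofPred_forall]
    exact .iInter fun i => (hS i).compl
  rw [hfind]
  exact measurable_find hex fun j => (hS j).union hempty

theorem measurable_sInf_image_of_isCompact {X Y : Type*} [MeasurableSpace X] [MetricSpace Y]
    {A : Set Y} (hA : IsCompact A) (hAne : A.Nonempty) {f : X → Y → ℝ}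
    (hmeas : ∀ y ∈ A, Measurable fun x => f x y) (hcont : ∀ x, ContinuousOn (f x) A) :
    Measurable fun x => sInf (f x '' A) := by
  obtain ⟨T, hTA, hTc, hAT⟩ := hA.isSeparable.exists_countable_dense_subset
  have hTne : T.Nonempty := by
    by_contra h
    simp only [not_nonempty_iff_eq_empty.1 h, closure_empty, subset_empty_iff] at hAT
    exact hAne.ne_empty hAT
  have hclosure : closure T = A := (closure_minimal hTA hA.isClosed).antisymm hAT
  have hdense : ∀ x, sInf (f x '' A) = sInf (f x '' T) := by
    intro x
    have hbdd : BddBelow (f x '' A) := (hA.image_of_continuousOn (hcont x)).bddBelow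
    refine le_antisymm (csInf_le_csInf hbdd (hTne.image _) (image_mono hTA)) ?_
    have hlow : f x '' T ⊆ Ici (sInf (f x '' T)) := fun _ hz =>
      csInf_le (hbdd.mono (image_mono hTA)) hz
    refine le_csInf (hAne.image _) fun z hz => ?_
    rw [← hclosure] at hz
    exact isClosed_Ici.closure_subset_iff.2 hlow
      (((hcont x).mono hclosure.le).image_closure hz)
  simp_rw [hdense, sInf_image']
  have := hTc.to_subtype
  exact .iInf fun t => hmeas t (hTA t.2)

def IsMeasurableMultifunction {X Y : Type*} [MeasurableSpace X] [TopologicalSpace Y]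
    (F : X → Set Y) : Prop :=
  ∀ C : Set Y, IsClosed C → MeasurableSet {x | (F x ∩ C).Nonempty}

namespace MeasurableSelection

variable {X Y : Type*} [MetricSpace Y] (a : ℕ → Y) (F : X → Set Y)

/-- Histories are stored newest first, so the entry at position `i` from the end selects a ball
of radius `2⁻ⁱ`. -/
def cell : List ℕ → Set Y
  | [] => univ
  | j :: l => cell l ∩ Metric.closedBall (a j) ((1 / 2 : ℝ) ^ l.length)

def nextIdx (x : X) (l : List ℕ) : ℕ :=
  sInf {j | (F x ∩ cell a (j :: l)).Nonempty}

def history (x : X) : ℕ → List ℕ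
  | 0 => []
  | n + 1 => nextIdx a F x (history x n) :: history x n

variable {a F}

theorem isClosed_cell : ∀ l : List ℕ, IsClosed (cell a l)
  | [] => isClosed_univ
  | _ :: l => (isClosed_cell l).inter Metric.isClosed_closedBall

theorem length_history (x : X) : ∀ n, (history a F x n).length = n
  | 0 => rfl
  | n + 1 => congrArg (· + 1) (length_history x n)

theorem cell_history_succ_subset (x : X) (n : ℕ) :
    cell a (history a F x (n + 1)) ⊆ cell a (history a F x n) :=
  inter_subset_left

theorem dist_le_of_mem_cell_history_succ {x : X} {n : ℕ} {y : Y}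
    (hy : y ∈ cell a (history a F x (n + 1))) :
    dist y (a (nextIdx a F x (history a F x n))) ≤ (1 / 2 : ℝ) ^ n := by
  have := hy.2
  rwa [Metric.mem_closedBall, length_history] at this

theorem nonempty_inter_cell_history (ha : DenseRange a) {x : X} (hFx : (F x).Nonempty) :
    ∀ n, (F x ∩ cell a (history a F x n)).Nonempty
  | 0 => by simpa [history, cell] using hFx
  | n + 1 => by
    obtain ⟨y, hyF, hyc⟩ := nonempty_inter_cell_history ha hFx n
    obtain ⟨j, hj⟩ := Metric.denseRange_iff.1 ha y _ (pow_pos (by norm_num : (0 : ℝ) < 1 / 2)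
      (history a F x n).length)
    exact Nat.sInf_mem (s := {j | (F x ∩ cell a (j :: history a F x n)).Nonempty})
      ⟨j, y, hyF, hyc, Metric.mem_closedBall.2 hj.le⟩

variable [MeasurableSpace X]

theorem measurable_nextIdx (hF : IsMeasurableMultifunction F)
    (l : List ℕ) : Measurable fun x => nextIdx a F x l :=
  measurable_nat_sInf fun j => hF _ (isClosed_cell (j :: l))

theorem measurableSet_history_eq
    (hF : IsMeasurableMultifunction F) :
    ∀ n l, MeasurableSet {x | history a F x n = l} := by
  intro n
  induction n with
  | zero => exact fun l => MeasurableSet.const (([] : List ℕ) = l)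
  | succ n ih =>
    rintro (_ | ⟨j, l⟩)
    · simp only [history, reduceCtorEq, ofPred_false, MeasurableSet.empty]
    · have : {x | history a F x (n + 1) = j :: l} =
          (fun x => nextIdx a F x l) ⁻¹' {j} ∩ {x | history a F x n = l} := by
        ext x
        simp only [history, mem_ofPred_eq, mem_inter_iff, mem_preimage, mem_singleton_iff,
          List.cons.injEq]
        constructor <;> rintro ⟨hj, rfl⟩ <;> exact ⟨hj, rfl⟩
      rw [this]
      exact (measurable_nextIdx hF l (measurableSet_singleton j)).inter (ih l)

theorem measurable_nextIdx_history
    (hF : IsMeasurableMultifunction F) (n : ℕ) :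
    Measurable fun x => nextIdx a F x (history a F x n) := by
  refine measurable_to_countable' fun j => ?_
  have : (fun x => nextIdx a F x (history a F x n)) ⁻¹' {j} =
      ⋃ l, {x | history a F x (n + 1) = j :: l} := by
    ext x
    simp [history]
  rw [this]
  exact .iUnion fun l => measurableSet_history_eq hF (n + 1) (j :: l)

end MeasurableSelection

open MeasurableSelection in
theorem exists_measurable_selection {X Y : Type*} [MeasurableSpace X] [MetricSpace Y]
    [TopologicalSpace.SeparableSpace Y] [MeasurableSpace Y] [BorelSpace Y] {F : X → Set Y}
    (hcpt : ∀ x, IsCompact (F x)) (hne : ∀ x, (F x).Nonempty)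
    (hF : IsMeasurableMultifunction F) :
    ∃ s : X → Y, Measurable s ∧ ∀ x, s x ∈ F x := by
  rcases isEmpty_or_nonempty X with _ | ⟨⟨x₀⟩⟩
  · exact ⟨isEmptyElim, measurable_of_empty _, isEmptyElim⟩
  have : Nonempty Y := (hne x₀).to_subtype.map Subtype.val
  set a := TopologicalSpace.denseSeq Y
  have hlim : ∀ x, ∃ y ∈ F x, ∀ n, y ∈ cell a (history a F x n) := by
    intro x
    obtain ⟨y, hy⟩ := IsCompact.nonempty_iInter_of_sequence_nonempty_isCompact_isClosed
      (fun n => F x ∩ cell a (history a F x n))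
      (fun n => inter_subset_inter_right _ (cell_history_succ_subset x n))
      (nonempty_inter_cell_history (TopologicalSpace.denseRange_denseSeq Y) (hne x))
      (by simpa [history, cell] using hcpt x)
      (fun n => (hcpt x).isClosed.inter (isClosed_cell _))
    simp only [mem_iInter] at hy
    exact ⟨y, (hy 0).1, fun n => (hy n).2⟩
  choose s hsF hscell using hlim
  refine ⟨s, measurable_of_tendsto_metrizable
    (f := fun n x => a (nextIdx a F x (history a F x n)))
    (fun n => measurable_from_top.comp (measurable_nextIdx_history hF n))
    (tendsto_pi_nhds.2 fun x => ?_), hsF⟩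
  rw [tendsto_iff_dist_tendsto_zero]
  refine squeeze_zero (fun _ => dist_nonneg) (fun n => ?_)
    (tendsto_pow_atTop_nhds_zero_of_lt_one (r := (1 / 2 : ℝ)) (by norm_num) (by norm_num))
  rw [dist_comm]
  exact dist_le_of_mem_cell_history_succ (hscell x (n + 1))

section CaratheodoryFunction

variable {X Y : Type*} [MeasurableSpace X] [MetricSpace Y] {A : Set Y} {f : X → Y → ℝ}

theorem isMeasurableMultifunction_argmin (hA : IsCompact A) (hAne : A.Nonempty)
    (hmeas : ∀ y ∈ A, Measurable fun x => f x y) (hcont : ∀ x, ContinuousOn (f x) A) :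
    IsMeasurableMultifunction fun x => A ∩ f x ⁻¹' Iic (sInf (f x '' A)) := by
  intro C hC
  rcases (A ∩ C).eq_empty_or_nonempty with hAC | hAC
  · convert MeasurableSet.empty
    refine eq_empty_of_forall_notMem fun x ⟨y, ⟨hyA, _⟩, hyC⟩ => ?_
    exact hAC.subset ⟨hyA, hyC⟩
  have hACcpt : IsCompact (A ∩ C) := hA.inter_right hC
  have hcontC : ∀ x, ContinuousOn (f x) (A ∩ C) := fun x => (hcont x).mono inter_subset_left
  have : {x | (A ∩ f x ⁻¹' Iic (sInf (f x '' A)) ∩ C).Nonempty} =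
      {x | sInf (f x '' (A ∩ C)) ≤ sInf (f x '' A)} := by
    ext x
    rw [mem_ofPred_eq, mem_ofPred_eq, hACcpt.csInf_image_le_iff hAC (hcontC x)]
    exact ⟨fun ⟨y, ⟨hyA, hy⟩, hyC⟩ => ⟨y, ⟨hyA, hyC⟩, hy⟩,
      fun ⟨y, ⟨hyA, hyC⟩, hy⟩ => ⟨y, ⟨hyA, hy⟩, hyC⟩⟩
  rw [this]
  exact measurableSet_le
    (measurable_sInf_image_of_isCompact hACcpt hAC (fun y hy => hmeas y hy.1) hcontC)
    (measurable_sInf_image_of_isCompact hA hAne hmeas hcont)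

variable [MeasurableSpace Y] [BorelSpace Y]

theorem exists_measurable_isMinOn [TopologicalSpace.SeparableSpace Y] (hA : IsCompact A)
    (hAne : A.Nonempty) (hmeas : ∀ y ∈ A, Measurable fun x => f x y)
    (hcont : ∀ x, ContinuousOn (f x) A) :
    ∃ s : X → Y, Measurable s ∧ ∀ x, s x ∈ A ∧ IsMinOn (f x) A (s x) := by
  have hbdd : ∀ x, BddBelow (f x '' A) := fun x =>
    (hA.image_of_continuousOn (hcont x)).bddBelow
  obtain ⟨s, hs, hsF⟩ := exists_measurable_selection
    (fun x => hA.of_isClosed_subset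
      ((hcont x).preimage_isClosed_of_isClosed hA.isClosed isClosed_Iic) inter_subset_left)
    (fun x => (hA.csInf_image_le_iff hAne (hcont x) _).1 le_rfl)
    (isMeasurableMultifunction_argmin hA hAne hmeas hcont)
  refine ⟨s, hs, fun x => ⟨(hsF x).1, isMinOn_iff.2 fun y hy => ?_⟩⟩
  exact (hsF x).2.trans (csInf_le (hbdd x) (mem_image_of_mem _ hy))

theorem exists_measurable_isMaxOn [TopologicalSpace.SeparableSpace Y] (hA : IsCompact A)
    (hAne : A.Nonempty) (hmeas : ∀ y ∈ A, Measurable fun x => f x y)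
    (hcont : ∀ x, ContinuousOn (f x) A) :
    ∃ s : X → Y, Measurable s ∧ ∀ x, s x ∈ A ∧ IsMaxOn (f x) A (s x) := by
  obtain ⟨s, hs, hsA⟩ := exists_measurable_isMinOn (f := fun x y => -f x y) hA hAne
    (fun y hy => (hmeas y hy).neg) fun x => (hcont x).neg
  exact ⟨s, hs, fun x => ⟨(hsA x).1, by simpa using (hsA x).2.neg⟩⟩

theorem measurable_comp_of_continuousOn [SecondCountableTopology Y]
    (hmeas : ∀ y ∈ A, Measurable fun x => f x y) (hcont : ∀ x, ContinuousOn (f x) A)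
    {s : X → Y} (hs : Measurable s) (hsA : ∀ x, s x ∈ A) : Measurable fun x => f x (s x) :=
  (measurable_uncurry_of_continuous_of_measurable (u := fun (y : A) x => f x y)
    (fun x => (hcont x).domRestrict) fun y => hmeas y y.2).comp
    ((hs.subtype_mk (h := hsA)).prodMk measurable_id)

theorem integrable_comp_of_integrable_sSup_abs [SecondCountableTopology Y]
    {μ : Measure X} (hA : IsCompact A) (hmeas : ∀ y ∈ A, Measurable fun x => f x y)
    (hcont : ∀ x, ContinuousOn (f x) A)
    (henv : Integrable (fun x => sSup ((fun y => |f x y|) '' A)) μ)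
    {s : X → Y} (hs : Measurable s) (hsA : ∀ x, s x ∈ A) : Integrable (fun x => f x (s x)) μ := by
  refine henv.mono (measurable_comp_of_continuousOn hmeas hcont hs hsA).aestronglyMeasurable
    (ae_of_all _ fun x => ?_)
  rw [Real.norm_eq_abs, Real.norm_eq_abs]
  exact (le_csSup (hA.image_of_continuousOn (hcont x).abs).bddAbove
    (mem_image_of_mem _ (hsA x))).trans (le_abs_self _)

end CaratheodoryFunction

theorem exchange_property_general (m k : ℕ)
    (A : Set (Ctl k)) (hAcp : IsCompact A) (hAne : A.Nonempty)
    (q : Measure (E m))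
    (f : E m → Ctl k → ℝ)
    (hfmeas : ∀ α ∈ A, Measurable fun x => f x α)
    (hfcont : ∀ x : E m, ContinuousOn (f x) A)
    (hfenv : Integrable (fun x => sSup ((fun α => |f x α|) '' A)) q) :
    -- min version: attainment …
    (∃ α₀ : E m → Ctl k, Measurable α₀ ∧ (∀ x, α₀ x ∈ A) ∧
        ∫ x, f x (α₀ x) ∂q = ∫ x, sInf (f x '' A) ∂q) ∧
    -- … and the integral of the pointwise min is a lower bound over all selections
    (∀ α : E m → Ctl k, Measurable α → (∀ x, α x ∈ A) →
        ∫ x, sInf (f x '' A) ∂q ≤ ∫ x, f x (α x) ∂q) ∧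
    -- max version: attainment …
    (∃ α₁ : E m → Ctl k, Measurable α₁ ∧ (∀ x, α₁ x ∈ A) ∧
        ∫ x, f x (α₁ x) ∂q = ∫ x, sSup (f x '' A) ∂q) ∧
    -- … and the integral of the pointwise max is an upper bound over all selections
    ∀ α : E m → Ctl k, Measurable α → (∀ x, α x ∈ A) →
        ∫ x, f x (α x) ∂q ≤ ∫ x, sSup (f x '' A) ∂q := by
  obtain ⟨α₀, hα₀, hα₀A⟩ := exists_measurable_isMinOn hAcp hAne hfmeas hfcont
  obtain ⟨α₁, hα₁, hα₁A⟩ := exists_measurable_isMaxOn hAcp hAne hfmeas hfcont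
  have hint : ∀ α : E m → Ctl k, Measurable α → (∀ x, α x ∈ A) →
      Integrable (fun x => f x (α x)) q := fun _ hα hαA =>
    integrable_comp_of_integrable_sSup_abs hAcp hfmeas hfcont hfenv hα hαA
  have hinf : (fun x => sInf (f x '' A)) = fun x => f x (α₀ x) :=
    funext fun x => (hα₀A x).2.csInf_image_eq (hα₀A x).1
  have hsup : (fun x => sSup (f x '' A)) = fun x => f x (α₁ x) :=
    funext fun x => (hα₁A x).2.csSup_image_eq (hα₁A x).1
  rw [hinf, hsup]
  refine ⟨⟨α₀, hα₀, fun x => (hα₀A x).1, rfl⟩, fun α hα hαA => ?_,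
    ⟨α₁, hα₁, fun x => (hα₁A x).1, rfl⟩, fun α hα hαA => ?_⟩
  · exact integral_mono (hint α₀ hα₀ fun x => (hα₀A x).1) (hint α hα hαA)
      fun x => isMinOn_iff.1 (hα₀A x).2 _ (hαA x)
  · exact integral_mono (hint α hα hαA) (hint α₁ hα₁ fun x => (hα₁A x).1)
      fun x => isMaxOn_iff.1 (hα₁A x).2 _ (hαA x)

/-- exchange property. For a compact control set `A`, a finite nonnegative
measure `q` with finite `d`-th moment and a payoff `f` measurable in `x`, continuous in `α`
and with `q`-integrable uniform envelope, one can exchange the pointwise minimization over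
`A` and the integration: the integral of the pointwise min equals the minimum over Borel
measurable selections (which is attained), and likewise with max. -/
theorem exchange_property (m k : ℕ) (d : ℝ) (hd : 1 ≤ d)
    (A : Set (Ctl k)) (hAcp : IsCompact A) (hAne : A.Nonempty)
    (q : Measure (E m)) [IsFiniteMeasure q]
    (hqmom : ∫⁻ x, ENNReal.ofReal (‖x‖ ^ d) ∂q < ⊤)
    (f : E m → Ctl k → ℝ)
    (hfmeas : ∀ α ∈ A, Measurable fun x => f x α)
    (hfcont : ∀ x : E m, ContinuousOn (f x) A)
    (hfenv : Integrable (fun x => sSup ((fun α => |f x α|) '' A)) q) :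
    -- min version: attainment …
    (∃ α₀ : E m → Ctl k, Measurable α₀ ∧ (∀ x, α₀ x ∈ A) ∧
        ∫ x, f x (α₀ x) ∂q = ∫ x, sInf (f x '' A) ∂q) ∧
    -- … and the integral of the pointwise min is a lower bound over all selections
    (∀ α : E m → Ctl k, Measurable α → (∀ x, α x ∈ A) →
        ∫ x, sInf (f x '' A) ∂q ≤ ∫ x, f x (α x) ∂q) ∧
    -- max version: attainment …
    (∃ α₁ : E m → Ctl k, Measurable α₁ ∧ (∀ x, α₁ x ∈ A) ∧
        ∫ x, f x (α₁ x) ∂q = ∫ x, sSup (f x '' A) ∂q) ∧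
    -- … and the integral of the pointwise max is an upper bound over all selections
    ∀ α : E m → Ctl k, Measurable α → (∀ x, α x ∈ A) →
        ∫ x, f x (α x) ∂q ≤ ∫ x, sSup (f x '' A) ∂q :=
  exchange_property_general m k A hAcp hAne q f hfmeas hfcont hfenv
end
end

section
/- Let d ≥ 1 and let f : ℝ^m × M_d(ℝ^m) → ℝ. Suppose that for each μ ∈ M_d(ℝ^m) and each x ∈ ℝ^m there is a map h ↦ D(x,μ)[h], linear in h ∈ M_d(ℝ^m), such that for every μ and h the function x ↦ D(x,μ)[h] is Borel measurable and bounded, and such that there is a function ε : [0,∞) → [0,∞) with ε(s) → 0 as s → 0⁺ and |f(x, μ+h) − f(x,μ) − D(x,μ)[h]| ≤ ε(‖h‖_TV)·‖h‖_TV for all x ∈ ℝ^m and all h ∈ M_d(ℝ^m) (uniform Fréchet differentiability in the measure variable). If the Lasry–Lions monotonicity condition holds, i.e. ∫ (f(x,μ₁) − f(x,μ₂)) d(μ₁−μ₂)(x) ≤ 0 for all μ₁, μ₂ ∈ M_d(ℝ^m), then ∫ D(x,μ)[h] dh(x) ≤ 0 for all μ, h ∈ M_d(ℝ^m). -/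
open MeasureTheory Filter Topology
open scoped ENNReal

noncomputable section

/-- Finite `d`-th moment of a signed measure. -/
def FiniteMomentSM {m : ℕ} (d : ℝ) (s : SignedMeasure (E m)) : Prop :=
  ∫⁻ x, ENNReal.ofReal (‖x‖ ^ d) ∂s.totalVariation < ⊤

/-- Integral of a function against a signed measure, via the Jordan decomposition. -/
def sInt {α : Type*} [MeasurableSpace α] (g : α → ℝ) (s : SignedMeasure α) : ℝ :=
  (∫ x, g x ∂s.toJordanDecomposition.posPart) - ∫ x, g x ∂s.toJordanDecomposition.negPart

/-! Apply the Lasry–Lions condition to `μ + t • h` and `μ` and divide by `t > 0`: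
`∫ (f(·, μ + t h) - f(·, μ)) dh ≤ 0`. Uniformly in `x` the integrand is `t D(·, μ)[h]` up to an
error `ε(t‖h‖) t‖h‖`, so `∫ D(·, μ)[h] dh ≤ ε(t‖h‖) ‖h‖²`, and `t → 0⁺` gives the claim.
Since `f` is not assumed measurable in `x`, measurability of `f(·, μ + h) - f(·, μ)` has to be
earned: it is the pointwise limit of the Riemann sums `∑ₖ n⁻¹ D(·, μ + (k/n) h)[h]`. -/

namespace MeasureTheory.SignedMeasure

variable {α : Type*} [MeasurableSpace α]

lemma totalVariation_add_le (s t : SignedMeasure α) :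
    (s + t).totalVariation ≤ s.totalVariation + t.totalVariation := by
  simpa only [totalVariation_eq_variation] using VectorMeasure.variation_add_le

lemma totalVariation_smul (c : ℝ) (s : SignedMeasure α) :
    (c • s).totalVariation = ‖c‖₊ • s.totalVariation := by
  simpa only [totalVariation_eq_variation] using VectorMeasure.variation_smul

end MeasureTheory.SignedMeasure

section SignedIntegral

variable {α : Type*} [MeasurableSpace α]

lemma tvNorm_nonneg (s : SignedMeasure α) : 0 ≤ tvNorm s := ENNReal.toReal_nonneg

lemma tvNorm_smul (c : ℝ) (s : SignedMeasure α) : tvNorm (c • s) = |c| * tvNorm s := by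
  simp [tvNorm, SignedMeasure.totalVariation_smul]

lemma tvNorm_eq_posPart_add_negPart (s : SignedMeasure α) :
    tvNorm s = s.toJordanDecomposition.posPart.real Set.univ
      + s.toJordanDecomposition.negPart.real Set.univ := by
  rw [tvNorm, SignedMeasure.totalVariation, ← measureReal_def, measureReal_add_apply]

lemma sInt_smul_of_nonneg {c : ℝ} (hc : 0 ≤ c) (g : α → ℝ) (s : SignedMeasure α) :
    sInt g (c • s) = c * sInt g s := by
  rw [sInt, sInt, SignedMeasure.toJordanDecomposition_smul_real,
    JordanDecomposition.real_smul_posPart_nonneg _ _ hc,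
    JordanDecomposition.real_smul_negPart_nonneg _ _ hc,
    integral_smul_nnreal_measure, integral_smul_nnreal_measure]
  simp [NNReal.smul_def, Real.coe_toNNReal c hc, mul_sub]

lemma sInt_const_mul (c : ℝ) (g : α → ℝ) (s : SignedMeasure α) :
    sInt (fun x => c * g x) s = c * sInt g s := by
  rw [sInt, sInt, integral_const_mul, integral_const_mul, mul_sub]

lemma abs_sInt_le {g : α → ℝ} {C : ℝ} (hC : ∀ x, |g x| ≤ C) (s : SignedMeasure α) :
    |sInt g s| ≤ C * tvNorm s := by
  have bound (ν : Measure α) [IsFiniteMeasure ν] : |∫ x, g x ∂ν| ≤ C * ν.real Set.univ :=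
    norm_integral_le_of_norm_le_const (ae_of_all _ fun x => (Real.norm_eq_abs _).trans_le (hC x))
  rw [sInt, tvNorm_eq_posPart_add_negPart, mul_add]
  exact (abs_sub _ _).trans (add_le_add (bound _) (bound _))

lemma abs_sInt_sub_sInt_le {g φ : α → ℝ} (hg : Measurable g) (hφ : Measurable φ) {C c : ℝ}
    (hφC : ∀ x, |φ x| ≤ C) (hgφ : ∀ x, |g x - φ x| ≤ c) (s : SignedMeasure α) :
    |sInt g s - sInt φ s| ≤ c * tvNorm s := by
  have hgC (x : α) : |g x| ≤ c + C := by
    simpa using (abs_add_le (g x - φ x) (φ x)).trans (add_le_add (hgφ x) (hφC x))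
  have integrable {ψ : α → ℝ} (hψ : Measurable ψ) {K : ℝ} (hK : ∀ x, |ψ x| ≤ K)
      (ν : Measure α) [IsFiniteMeasure ν] : Integrable ψ ν :=
    .of_bound hψ.aestronglyMeasurable K (ae_of_all _ hK)
  have hsub : sInt g s - sInt φ s = sInt (fun x => g x - φ x) s := by
    simp only [sInt]
    rw [integral_sub (integrable hg hgC _) (integrable hφ hφC _),
      integral_sub (integrable hg hgC _) (integrable hφ hφC _)]
    ring
  exact hsub ▸ abs_sInt_le hgφ s

end SignedIntegral

lemma tendsto_comp_mul_const_mul_const_nhdsGT {ε : ℝ → ℝ} (hε : Tendsto ε (𝓝[>] 0) (𝓝 0))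
    {a : ℝ} (ha : 0 ≤ a) : Tendsto (fun r => ε (r * a) * a) (𝓝[>] 0) (𝓝 0) := by
  rcases ha.eq_or_lt with rfl | ha
  · simp
  have hmul : Tendsto (fun r : ℝ => r * a) (𝓝[>] 0) (𝓝[>] 0) := by
    refine tendsto_nhdsWithin_of_tendsto_nhds_of_eventually_within _ ?_ ?_
    · exact ((continuous_mul_const a).tendsto' 0 0 (zero_mul a)).mono_left nhdsWithin_le_nhds
    · filter_upwards [self_mem_nhdsWithin] with r hr using mul_pos hr ha
  simpa using (hε.comp hmul).mul_const a

lemma abs_sub_sub_sum_le {F G ω : ℝ → ℝ}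
    (hF : ∀ r δ, 0 ≤ r → 0 < δ → |F (r + δ) - F r - δ * G r| ≤ ω δ * δ) {n : ℕ} (hn : 0 < n) :
    |F 1 - F 0 - ∑ k ∈ Finset.range n, (n : ℝ)⁻¹ * G (k / n)| ≤ ω (n : ℝ)⁻¹ := by
  have hn' : (n : ℝ) ≠ 0 := by positivity
  have hnode (k : ℕ) : ((k + 1 : ℕ) : ℝ) / n = k / n + (n : ℝ)⁻¹ := by
    push_cast; field_simp
  have htel : F 1 - F 0 = ∑ k ∈ Finset.range n, (F ((k + 1 : ℕ) / n) - F (k / n)) := by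
    rw [Finset.sum_range_sub (fun k : ℕ => F (k / n)), div_self hn']
    simp
  calc |F 1 - F 0 - ∑ k ∈ Finset.range n, (n : ℝ)⁻¹ * G (k / n)|
      = |∑ k ∈ Finset.range n, (F (k / n + (n : ℝ)⁻¹) - F (k / n) - (n : ℝ)⁻¹ * G (k / n))| := by
        simp only [htel, hnode, Finset.sum_sub_distrib]
    _ ≤ ∑ _k ∈ Finset.range n, ω (n : ℝ)⁻¹ * (n : ℝ)⁻¹ :=
        (Finset.abs_sum_le_sum_abs _ _).trans
          (Finset.sum_le_sum fun k _ => hF _ _ (by positivity) (by positivity))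
    _ = ω (n : ℝ)⁻¹ := by
        rw [Finset.sum_const, Finset.card_range, nsmul_eq_mul]
        field_simp

lemma measurable_sub_of_forall_abs_sub_sub_le {α : Type*} [MeasurableSpace α]
    {F G : ℝ → α → ℝ} {ω : ℝ → ℝ} (hω : Tendsto ω (𝓝[>] 0) (𝓝 0))
    (hG : ∀ r, 0 ≤ r → Measurable (G r))
    (hF : ∀ r δ, 0 ≤ r → 0 < δ → ∀ x, |F (r + δ) x - F r x - δ * G r x| ≤ ω δ * δ) :
    Measurable fun x => F 1 x - F 0 x := by
  refine measurable_of_tendsto_metrizable (f := fun (n : ℕ) x =>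
      ∑ k ∈ Finset.range n, (n : ℝ)⁻¹ * G (k / n) x)
    (fun n => Finset.measurable_sum _ fun k _ => (hG _ (by positivity)).const_mul _) ?_
  refine tendsto_pi_nhds.2 fun x => tendsto_iff_dist_tendsto_zero.2 ?_
  have hinv : Tendsto (fun n : ℕ => (n : ℝ)⁻¹) atTop (𝓝[>] 0) :=
    tendsto_inv_atTop_nhdsGT_zero.comp tendsto_natCast_atTop_atTop
  refine squeeze_zero' (.of_forall fun n => dist_nonneg) ?_ (hω.comp hinv)
  filter_upwards [eventually_gt_atTop 0] with n hn
  rw [Real.dist_eq, abs_sub_comm]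
  exact abs_sub_sub_sum_le (F := fun r => F r x) (G := fun r => G r x)
    (fun r δ hr hδ => hF r δ hr hδ x) hn

section FiniteMoment

variable {m : ℕ} {d : ℝ}

lemma FiniteMomentSM.add {μ ν : SignedMeasure (E m)} (hμ : FiniteMomentSM d μ)
    (hν : FiniteMomentSM d ν) : FiniteMomentSM d (μ + ν) :=
  calc ∫⁻ x, ENNReal.ofReal (‖x‖ ^ d) ∂(μ + ν).totalVariation
      ≤ ∫⁻ x, ENNReal.ofReal (‖x‖ ^ d) ∂(μ.totalVariation + ν.totalVariation) :=
        lintegral_mono' (μ.totalVariation_add_le ν) le_rfl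
    _ < ⊤ := by rw [lintegral_add_measure]; exact ENNReal.add_lt_top.2 ⟨hμ, hν⟩

lemma FiniteMomentSM.smul (c : ℝ) {μ : SignedMeasure (E m)} (hμ : FiniteMomentSM d μ) :
    FiniteMomentSM d (c • μ) := by
  rw [FiniteMomentSM, SignedMeasure.totalVariation_smul, lintegral_smul_measure]
  exact ENNReal.mul_lt_top ENNReal.coe_lt_top hμ

end FiniteMoment

section DerivativeCondition

variable {m : ℕ} {d : ℝ} {f : E m → SignedMeasure (E m) → ℝ}
  {D : E m → SignedMeasure (E m) → SignedMeasure (E m) → ℝ} {ε : ℝ → ℝ}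

lemma measurable_sub_of_uniform_frechet (hε : Tendsto ε (𝓝[>] 0) (𝓝 0))
    (hsmul : ∀ x μ, FiniteMomentSM d μ → ∀ (c : ℝ) h, FiniteMomentSM d h →
      D x μ (c • h) = c * D x μ h)
    (hmeas : ∀ μ h, FiniteMomentSM d μ → FiniteMomentSM d h → Measurable fun x => D x μ h)
    (hFrechet : ∀ x μ h, FiniteMomentSM d μ → FiniteMomentSM d h →
      |f x (μ + h) - f x μ - D x μ h| ≤ ε (tvNorm h) * tvNorm h)
    {μ h : SignedMeasure (E m)} (hμ : FiniteMomentSM d μ) (hh : FiniteMomentSM d h) :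
    Measurable fun x => f x (μ + h) - f x μ := by
  have hpath (r : ℝ) : FiniteMomentSM d (μ + r • h) := hμ.add (hh.smul r)
  have key := measurable_sub_of_forall_abs_sub_sub_le (F := fun r x => f x (μ + r • h))
    (G := fun r x => D x (μ + r • h) h)
    (tendsto_comp_mul_const_mul_const_nhdsGT hε (tvNorm_nonneg h))
    (fun r _ => hmeas _ _ (hpath r) hh) fun r δ _ hδ x => by
      have step := hFrechet x (μ + r • h) (δ • h) (hpath r) (hh.smul δ)
      rw [add_assoc, ← add_smul, hsmul x _ (hpath r) δ h hh, tvNorm_smul, abs_of_pos hδ] at step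
      linarith
  simpa using key

lemma sInt_deriv_le_of_lasryLions (hε : Tendsto ε (𝓝[>] 0) (𝓝 0))
    (hsmul : ∀ x μ, FiniteMomentSM d μ → ∀ (c : ℝ) h, FiniteMomentSM d h →
      D x μ (c • h) = c * D x μ h)
    (hmeas : ∀ μ h, FiniteMomentSM d μ → FiniteMomentSM d h →
      Measurable (fun x => D x μ h) ∧ ∃ C : ℝ, ∀ x : E m, |D x μ h| ≤ C)
    (hFrechet : ∀ x μ h, FiniteMomentSM d μ → FiniteMomentSM d h →
      |f x (μ + h) - f x μ - D x μ h| ≤ ε (tvNorm h) * tvNorm h)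
    (hLL : ∀ μ₁ μ₂, FiniteMomentSM d μ₁ → FiniteMomentSM d μ₂ →
      sInt (fun x => f x μ₁ - f x μ₂) (μ₁ - μ₂) ≤ 0)
    {μ h : SignedMeasure (E m)} (hμ : FiniteMomentSM d μ) (hh : FiniteMomentSM d h)
    {t : ℝ} (ht : 0 < t) :
    sInt (fun x => D x μ h) h ≤ ε (t * tvNorm h) * tvNorm h * tvNorm h := by
  obtain ⟨hDm, C, hC⟩ := hmeas μ h hμ hh
  have hth := hh.smul t
  have hincr : sInt (fun x => f x (μ + t • h) - f x μ) h ≤ 0 := by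
    have mono := hLL (μ + t • h) μ (hμ.add hth) hμ
    rw [add_sub_cancel_left, sInt_smul_of_nonneg ht.le] at mono
    exact nonpos_of_mul_nonpos_right mono ht
  have hlinear (x : E m) :
      |f x (μ + t • h) - f x μ - t * D x μ h| ≤ ε (t * tvNorm h) * (t * tvNorm h) := by
    simpa [hsmul x μ hμ t h hh, tvNorm_smul, abs_of_pos ht] using hFrechet x μ _ hμ hth
  have hincr_meas : Measurable fun x => f x (μ + t • h) - f x μ :=
    measurable_sub_of_uniform_frechet hε hsmul (fun μ h hμ hh => (hmeas μ h hμ hh).1) hFrechet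
      hμ hth
  have hclose := abs_sInt_sub_sInt_le hincr_meas
    (hDm.const_mul t) (C := t * C) (fun x => by rw [abs_mul, abs_of_pos ht]; gcongr; exact hC x)
    hlinear h
  rw [sInt_const_mul] at hclose
  have hscaled :
      t * sInt (fun x => D x μ h) h ≤ t * (ε (t * tvNorm h) * tvNorm h * tvNorm h) := by
    linarith [(abs_le.1 hclose).1]
  exact le_of_mul_le_mul_left hscaled ht

end DerivativeCondition

theorem LL_monotonicity_implies_derivative_condition_general (m : ℕ) (d : ℝ)
    (f : E m → SignedMeasure (E m) → ℝ)
    (D : E m → SignedMeasure (E m) → SignedMeasure (E m) → ℝ)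
    -- linearity of h ↦ D(x,μ)[h] on M_d
    (hlin : ∀ (x : E m) (μ : SignedMeasure (E m)), FiniteMomentSM d μ →
      (∀ h₁ h₂ : SignedMeasure (E m), FiniteMomentSM d h₁ → FiniteMomentSM d h₂ →
        D x μ (h₁ + h₂) = D x μ h₁ + D x μ h₂) ∧
      ∀ (c : ℝ) (h : SignedMeasure (E m)), FiniteMomentSM d h →
        D x μ (c • h) = c * D x μ h)
    -- x ↦ D(x,μ)[h] is Borel measurable and bounded
    (hmeas : ∀ (μ h : SignedMeasure (E m)), FiniteMomentSM d μ → FiniteMomentSM d h →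
      Measurable (fun x => D x μ h) ∧ ∃ C : ℝ, ∀ x : E m, |D x μ h| ≤ C)
    -- uniform Fréchet differentiability with modulus ε
    (ε : ℝ → ℝ)
    (hεlim : Tendsto ε (𝓝[>] (0 : ℝ)) (𝓝 (0 : ℝ)))
    (hFrechet : ∀ (x : E m) (μ h : SignedMeasure (E m)),
      FiniteMomentSM d μ → FiniteMomentSM d h →
      |f x (μ + h) - f x μ - D x μ h| ≤ ε (tvNorm h) * tvNorm h)
    -- Lasry–Lions monotonicity
    (hLL : ∀ μ₁ μ₂ : SignedMeasure (E m), FiniteMomentSM d μ₁ → FiniteMomentSM d μ₂ →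
      sInt (fun x => f x μ₁ - f x μ₂) (μ₁ - μ₂) ≤ 0) :
    ∀ μ h : SignedMeasure (E m), FiniteMomentSM d μ → FiniteMomentSM d h →
      sInt (fun x => D x μ h) h ≤ 0 := by
  intro μ h hμ hh
  have hbound : ∀ᶠ t in 𝓝[>] (0 : ℝ),
      sInt (fun x => D x μ h) h ≤ ε (t * tvNorm h) * tvNorm h * tvNorm h :=
    eventually_nhdsWithin_of_forall fun t ht =>
      sInt_deriv_le_of_lasryLions hεlim (fun x μ hμ => (hlin x μ hμ).2) hmeas hFrechet hLL hμ hh ht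
  have hlim :=
    (tendsto_comp_mul_const_mul_const_nhdsGT hεlim (tvNorm_nonneg h)).mul_const (tvNorm h)
  rw [zero_mul] at hlim
  exact ge_of_tendsto hlim hbound

/-- If `f : ℝ^m × M_d(ℝ^m) → ℝ` is uniformly Fréchet differentiable in
the measure variable, with derivative `D(x,μ)[·]` linear, bounded and Borel measurable in
`x`, and `f` satisfies the Lasry–Lions monotonicity condition
`∫ (f(x,μ₁) - f(x,μ₂)) d(μ₁ - μ₂)(x) ≤ 0`, then `∫ D(x,μ)[h] dh(x) ≤ 0` for all
`μ, h ∈ M_d(ℝ^m)`. -/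
theorem LL_monotonicity_implies_derivative_condition (m : ℕ) (d : ℝ) (hd : 1 ≤ d)
    (f : E m → SignedMeasure (E m) → ℝ)
    (D : E m → SignedMeasure (E m) → SignedMeasure (E m) → ℝ)
    -- linearity of h ↦ D(x,μ)[h] on M_d
    (hlin : ∀ (x : E m) (μ : SignedMeasure (E m)), FiniteMomentSM d μ →
      (∀ h₁ h₂ : SignedMeasure (E m), FiniteMomentSM d h₁ → FiniteMomentSM d h₂ →
        D x μ (h₁ + h₂) = D x μ h₁ + D x μ h₂) ∧
      ∀ (c : ℝ) (h : SignedMeasure (E m)), FiniteMomentSM d h →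
        D x μ (c • h) = c * D x μ h)
    -- x ↦ D(x,μ)[h] is Borel measurable and bounded
    (hmeas : ∀ (μ h : SignedMeasure (E m)), FiniteMomentSM d μ → FiniteMomentSM d h →
      Measurable (fun x => D x μ h) ∧ ∃ C : ℝ, ∀ x : E m, |D x μ h| ≤ C)
    -- uniform Fréchet differentiability with modulus ε
    (ε : ℝ → ℝ) (hεnonneg : ∀ s : ℝ, 0 ≤ ε s)
    (hεlim : Tendsto ε (𝓝[>] (0 : ℝ)) (𝓝 (0 : ℝ)))
    (hFrechet : ∀ (x : E m) (μ h : SignedMeasure (E m)),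
      FiniteMomentSM d μ → FiniteMomentSM d h →
      |f x (μ + h) - f x μ - D x μ h| ≤ ε (tvNorm h) * tvNorm h)
    -- Lasry–Lions monotonicity
    (hLL : ∀ μ₁ μ₂ : SignedMeasure (E m), FiniteMomentSM d μ₁ → FiniteMomentSM d μ₂ →
      sInt (fun x => f x μ₁ - f x μ₂) (μ₁ - μ₂) ≤ 0) :
    ∀ μ h : SignedMeasure (E m), FiniteMomentSM d μ → FiniteMomentSM d h →
      sInt (fun x => D x μ h) h ≤ 0 :=
  LL_monotonicity_implies_derivative_condition_general m d f D hlin hmeas ε hεlim hFrechet hLL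
end
end

section
/- Let m ≥ 1, d ≥ 1, and let A be a compact subset of ℝ^k. Let a : ℝ^m × A → (symmetric m×m real matrices) satisfy ξ·a(x,α)ξ ≤ Λ|ξ|² for some Λ > 0 and all x, ξ ∈ ℝ^m, α ∈ A, and let b : ℝ^m × A → ℝ^m satisfy sup_{α∈A} b(x,α)·x ≤ γ₁ − γ₂|x|^χ for some constants χ, γ₁, γ₂ > 0 and all x ∈ ℝ^m. Define ψ(x) = |x|^d · log|x| for |x| > 1. Then ψ(x) → +∞ as |x| → +∞, and there exists R₀ > 1 such that for all x with |x| ≥ R₀ and all α ∈ A one has trace(a(x,α)·D²ψ(x)) + b(x,α)·∇ψ(x) ≤ 0; consequently min_{α∈A} { −trace(a(x,α)·D²ψ(x)) − b(x,α)·∇ψ(x) } ≥ 0 outside the closed ball of radius R₀. Moreover, every function v : ℝ^m → ℝ satisfying |v(x)| ≤ C(1+|x|^d) for some C > 0 satisfies v(x)/ψ(x) → 0 as |x| → +∞. -/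
/-!
Write `ψ y = Ψ (‖y‖²)` with `Ψ t = t^(d/2) log t / 2`. Then `∇ψ(x) = 2Ψ'(t) x` and
`D²ψ(x) = 4Ψ''(t) x xᵀ + 2Ψ'(t) I` with `t = ‖x‖²`, and for `t ≥ 1`, `d ≥ 1` this Hessian is
positive semidefinite with trace at most `(2d - 2 + m) 2Ψ'(t)`. Since `ΛI - a` is positive
semidefinite too, `trace(a D²ψ) ≤ Λ trace D²ψ`, so
`Lψ ≤ 2Ψ'(t) (Λ(2d - 2 + m) + γ₁ - γ₂ ‖x‖^χ)`, which is `≤ 0` once `‖x‖` is large.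
The growth claims follow from `|x|^d log|x| → ∞` and `C(1 + r^d) / (r^d log r) ≤ 2C / log r`.
-/

open MeasureTheory Filter Topology Set Matrix

noncomputable section

/-- `i`-th partial derivative. -/
def pd {m : ℕ} (i : Fin m) (φ : E m → ℝ) (x : E m) : ℝ :=
  fderiv ℝ φ x (EuclideanSpace.single i 1)

/-- The second order operator `L φ = trace(a D²φ) + b ⬝ ∇φ`. -/
def Lop {m : ℕ} (a : E m → Matrix (Fin m) (Fin m) ℝ) (b : E m → E m)
    (φ : E m → ℝ) (x : E m) : ℝ :=
  (∑ i, ∑ j, a x i j * pd i (pd j φ) x) + ∑ i, b x i * pd i φ x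

namespace Matrix

variable {n : Type*} [Fintype n] [DecidableEq n]

open scoped ComplexOrder MatrixOrder in
theorem PosSemidef.trace_mul_nonneg {𝕜 : Type*} [RCLike 𝕜] {A B : Matrix n n 𝕜}
    (hA : A.PosSemidef) (hB : B.PosSemidef) : 0 ≤ (A * B).trace := by
  have hS : (CFC.sqrt B)ᴴ = CFC.sqrt B := (CFC.sqrt_nonneg B).isSelfAdjoint.star_eq
  have h := (hA.conjTranspose_mul_mul_same (CFC.sqrt B)).trace_nonneg
  rwa [hS, trace_mul_cycle, CFC.sqrt_mul_sqrt_self B hB.nonneg, trace_mul_comm] at h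

theorem trace_mul_le_of_dotProduct_mulVec_le {a H : Matrix n n ℝ} {Λ : ℝ} (ha : a.IsSymm)
    (hq : ∀ v : n → ℝ, v ⬝ᵥ (a *ᵥ v) ≤ Λ * (v ⬝ᵥ v)) (hH : H.PosSemidef) :
    (a * H).trace ≤ Λ * H.trace := by
  have hB : (Λ • 1 - a).PosSemidef := by
    refine .of_dotProduct_mulVec_nonneg
      (isHermitian_iff_isSymm.2 ((isSymm_one.smul Λ).sub ha)) fun v => ?_
    simpa [sub_mulVec, dotProduct_sub, smul_mulVec] using hq v
  simpa [sub_mul, trace_sub, trace_smul] using hB.trace_mul_nonneg hH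

theorem posSemidef_smul_vecMulVec_add_smul_one {x : n → ℝ} {α β : ℝ} (hβ : 0 ≤ β)
    (hαβ : 0 ≤ α * (x ⬝ᵥ x) + β) : (α • vecMulVec x x + β • 1).PosSemidef := by
  have hsymm : (α • vecMulVec x x + β • 1).IsSymm :=
    ((IsSymm.ext fun i j => mul_comm _ _).smul α).add (isSymm_one.smul β)
  refine .of_dotProduct_mulVec_nonneg (isHermitian_iff_isSymm.2 hsymm) fun v => ?_
  have hq : star v ⬝ᵥ ((α • vecMulVec x x + β • 1) *ᵥ v) =
      α * (x ⬝ᵥ v) ^ 2 + β * (v ⬝ᵥ v) := by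
    simp [add_mulVec, smul_mulVec, vecMulVec_mulVec, dotProduct_add, dotProduct_smul,
      dotProduct_comm v x, sq]
  have hv : 0 ≤ v ⬝ᵥ v := Finset.sum_nonneg fun i _ => mul_self_nonneg (v i)
  rw [hq]
  rcases le_or_gt 0 α with hα | hα
  · positivity
  · have hcs : (x ⬝ᵥ v) ^ 2 ≤ (x ⬝ᵥ x) * (v ⬝ᵥ v) := by
      simpa [dotProduct, sq] using Finset.sum_mul_sq_le_sq_mul_sq Finset.univ x v
    nlinarith

theorem trace_smul_vecMulVec_add_smul_one (x : n → ℝ) (α β : ℝ) :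
    (α • vecMulVec x x + β • 1).trace = α * (x ⬝ᵥ x) + β * Fintype.card n := by
  simp [trace_add, trace_smul, trace_vecMulVec]

end Matrix

theorem hasFDerivAt_comp_norm_sq {F : Type*} [NormedAddCommGroup F] [InnerProductSpace ℝ F]
    {f : ℝ → ℝ} {c : ℝ} {x : F} (hf : HasDerivAt f c (‖x‖ ^ 2)) :
    HasFDerivAt (fun y => f (‖y‖ ^ 2)) ((2 * c) • innerSL ℝ x) x :=
  (hf.comp_hasFDerivAt x (hasStrictFDerivAt_norm_sq x).hasFDerivAt).congr_fderiv <| by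
    ext; simp; ring

theorem EuclideanSpace.dotProduct_self_eq_norm_sq {ι : Type*} [Fintype ι]
    (x : EuclideanSpace ℝ ι) : ⇑x ⬝ᵥ ⇑x = ‖x‖ ^ 2 := by
  rw [← real_inner_self_eq_norm_sq, EuclideanSpace.inner_eq_star_dotProduct, star_trivial]

section Radial

variable {m : ℕ}

theorem pd_comp_norm_sq {f : ℝ → ℝ} {c : ℝ} {x : E m} (hf : HasDerivAt f c (‖x‖ ^ 2))
    (i : Fin m) : pd i (fun y => f (‖y‖ ^ 2)) x = 2 * c * x i := by
  simp [pd, (hasFDerivAt_comp_norm_sq hf).fderiv, EuclideanSpace.inner_single_right]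

theorem pd_pd_comp_norm_sq {f f' : ℝ → ℝ} {c : ℝ} {x : E m}
    (hf : ∀ᶠ t in 𝓝 (‖x‖ ^ 2), HasDerivAt f (f' t) t) (hf' : HasDerivAt f' c (‖x‖ ^ 2))
    (i j : Fin m) :
    pd i (pd j fun y => f (‖y‖ ^ 2)) x =
      ((4 * c) • vecMulVec ⇑x ⇑x + (2 * f' (‖x‖ ^ 2)) • (1 : Matrix (Fin m) (Fin m) ℝ)) i j := by
  have hgrad : pd j (fun y => f (‖y‖ ^ 2)) =ᶠ[𝓝 x] fun y => 2 * f' (‖y‖ ^ 2) * y j := by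
    filter_upwards [((continuous_norm.pow 2).tendsto x).eventually hf] with y hy
    exact pd_comp_norm_sq hy j
  have hcoord : HasFDerivAt (fun y : E m => y j) (EuclideanSpace.proj j : E m →L[ℝ] ℝ) x :=
    (EuclideanSpace.proj j : E m →L[ℝ] ℝ).hasFDerivAt
  rw [pd, hgrad.fderiv_eq, (((hasFDerivAt_comp_norm_sq hf').const_mul 2).fun_mul hcoord).fderiv]
  simp [EuclideanSpace.inner_single_right, vecMulVec_apply, one_apply, eq_comm (a := j)]
  ring

theorem Lop_eq_trace_mul_add {a : E m → Matrix (Fin m) (Fin m) ℝ} {b : E m → E m}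
    {φ : E m → ℝ} {x : E m} {H : Matrix (Fin m) (Fin m) ℝ} (hs : H.IsSymm)
    (hH : ∀ i j, pd i (pd j φ) x = H i j) :
    Lop a b φ x = (a x * H).trace + ∑ i, b x i * pd i φ x := by
  simp [Lop, trace, mul_apply, hH, hs.apply]

end Radial

def psiProfile (d t : ℝ) : ℝ := t ^ (d / 2) * Real.log t / 2

def psiProfileDeriv (d t : ℝ) : ℝ := t ^ (d / 2 - 1) * (d / 2 * Real.log t + 1) / 2

def psiProfileDeriv2 (d t : ℝ) : ℝ :=
  t ^ (d / 2 - 2) * ((d / 2 - 1) * (d / 2 * Real.log t + 1) + d / 2) / 2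

theorem norm_rpow_mul_log_eq_psiProfile {F : Type*} [NormedAddCommGroup F] (d : ℝ) (y : F) :
    ‖y‖ ^ d * Real.log ‖y‖ = psiProfile d (‖y‖ ^ 2) := by
  rw [psiProfile, ← Real.rpow_natCast_mul (norm_nonneg y), Real.log_pow]
  push_cast
  ring_nf

theorem hasDerivAt_psiProfile {d t : ℝ} (ht : 0 < t) :
    HasDerivAt (psiProfile d) (psiProfileDeriv d t) t := by
  refine (((Real.hasDerivAt_rpow_const (.inl ht.ne')).fun_mul
    (Real.hasDerivAt_log ht.ne')).div_const 2).congr_deriv ?_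
  rw [psiProfileDeriv]
  linear_combination -(Real.rpow_sub_one ht.ne' (d / 2)) / 2

theorem hasDerivAt_psiProfileDeriv {d t : ℝ} (ht : 0 < t) :
    HasDerivAt (psiProfileDeriv d) (psiProfileDeriv2 d t) t := by
  refine (((Real.hasDerivAt_rpow_const (.inl ht.ne')).fun_mul
    (((Real.hasDerivAt_log ht.ne').const_mul (d / 2)).add_const 1)).div_const 2).congr_deriv ?_
  rw [psiProfileDeriv2, show d / 2 - 2 = d / 2 - 1 - 1 by ring]
  linear_combination -d / 4 * Real.rpow_sub_one ht.ne' (d / 2 - 1)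

section ProfileBounds

variable {d t : ℝ}

theorem one_le_half_mul_log_add_one (hd : 0 ≤ d) (ht : 1 ≤ t) : 1 ≤ d / 2 * Real.log t + 1 := by
  have := Real.log_nonneg ht
  nlinarith

theorem psiProfileDeriv_nonneg (hd : 0 ≤ d) (ht : 1 ≤ t) : 0 ≤ psiProfileDeriv d t := by
  have := one_le_half_mul_log_add_one hd ht
  unfold psiProfileDeriv
  positivity

theorem two_mul_mul_psiProfileDeriv2 (ht : 0 < t) :
    2 * t * psiProfileDeriv2 d t =
      t ^ (d / 2 - 1) * ((d / 2 - 1) * (d / 2 * Real.log t + 1) + d / 2) := by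
  rw [psiProfileDeriv2, show d / 2 - 1 = d / 2 - 2 + 1 by ring, Real.rpow_add_one ht.ne']
  ring

theorem psiProfileDeriv_add_two_mul_mul_deriv2_nonneg (hd : 1 ≤ d) (ht : 1 ≤ t) :
    0 ≤ psiProfileDeriv d t + 2 * t * psiProfileDeriv2 d t := by
  have hL := one_le_half_mul_log_add_one (zero_le_one.trans hd) ht
  have hP : 0 ≤ t ^ (d / 2 - 1) := by positivity
  have h : 0 ≤ (d / 2 - 1 / 2) * (d / 2 * Real.log t + 1) + d / 2 := by nlinarith
  rw [two_mul_mul_psiProfileDeriv2 (by linarith), psiProfileDeriv]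
  linarith [mul_nonneg hP h]

theorem two_mul_mul_psiProfileDeriv2_le (hd : 0 ≤ d) (ht : 1 ≤ t) :
    2 * t * psiProfileDeriv2 d t ≤ (2 * d - 2) * psiProfileDeriv d t := by
  have hL := one_le_half_mul_log_add_one hd ht
  have hP : 0 ≤ t ^ (d / 2 - 1) := by positivity
  have h : (d / 2 - 1) * (d / 2 * Real.log t + 1) + d / 2 ≤
      (d - 1) * (d / 2 * Real.log t + 1) := by
    nlinarith
  rw [two_mul_mul_psiProfileDeriv2 (by linarith), psiProfileDeriv]
  linarith [mul_le_mul_of_nonneg_left h hP]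

end ProfileBounds

section Hessian

variable {m : ℕ} {d : ℝ} {x : E m}

def psiHessian (d : ℝ) (x : E m) : Matrix (Fin m) (Fin m) ℝ :=
  (4 * psiProfileDeriv2 d (‖x‖ ^ 2)) • vecMulVec ⇑x ⇑x + (2 * psiProfileDeriv d (‖x‖ ^ 2)) • 1

theorem pd_norm_rpow_mul_log (hx : 0 < ‖x‖) (i : Fin m) :
    pd i (fun y => ‖y‖ ^ d * Real.log ‖y‖) x = 2 * psiProfileDeriv d (‖x‖ ^ 2) * x i := by
  simp only [norm_rpow_mul_log_eq_psiProfile d]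
  exact pd_comp_norm_sq (hasDerivAt_psiProfile (by positivity)) i

theorem pd_pd_norm_rpow_mul_log (hx : 0 < ‖x‖) (i j : Fin m) :
    pd i (pd j fun y => ‖y‖ ^ d * Real.log ‖y‖) x = psiHessian d x i j := by
  simp only [norm_rpow_mul_log_eq_psiProfile d]
  exact pd_pd_comp_norm_sq ((eventually_gt_nhds (by positivity)).mono fun _ ht =>
    hasDerivAt_psiProfile ht) (hasDerivAt_psiProfileDeriv (by positivity)) i j

theorem psiHessian_posSemidef (hd : 1 ≤ d) (hx : 1 ≤ ‖x‖) : (psiHessian d x).PosSemidef := by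
  have ht : 1 ≤ ‖x‖ ^ 2 := one_le_pow₀ hx
  refine posSemidef_smul_vecMulVec_add_smul_one
    (by linarith [psiProfileDeriv_nonneg (zero_le_one.trans hd) ht]) ?_
  rw [EuclideanSpace.dotProduct_self_eq_norm_sq]
  linarith [psiProfileDeriv_add_two_mul_mul_deriv2_nonneg hd ht]

theorem trace_psiHessian_le (hd : 0 ≤ d) (hx : 1 ≤ ‖x‖) :
    (psiHessian d x).trace ≤ (2 * d - 2 + m) * (2 * psiProfileDeriv d (‖x‖ ^ 2)) := by
  rw [psiHessian, trace_smul_vecMulVec_add_smul_one, EuclideanSpace.dotProduct_self_eq_norm_sq,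
    Fintype.card_fin]
  linarith [two_mul_mul_psiProfileDeriv2_le hd (one_le_pow₀ (n := 2) hx)]

end Hessian

theorem Lop_norm_rpow_mul_log_le {m : ℕ} {d Λ : ℝ} (hd : 1 ≤ d) (hΛ : 0 ≤ Λ)
    {a : E m → Matrix (Fin m) (Fin m) ℝ} {b : E m → E m} {x : E m} (hx : 1 ≤ ‖x‖)
    (hs : (a x).IsSymm) (ha : ∀ ξ : E m, ∑ i, ∑ j, ξ i * a x i j * ξ j ≤ Λ * ‖ξ‖ ^ 2) :
    Lop a b (fun y => ‖y‖ ^ d * Real.log ‖y‖) x ≤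
      2 * psiProfileDeriv d (‖x‖ ^ 2) * (Λ * (2 * d - 2 + m) + ∑ i, b x i * x i) := by
  have hx0 : 0 < ‖x‖ := zero_lt_one.trans_le hx
  have hH := psiHessian_posSemidef hd hx
  have hq : ∀ v : Fin m → ℝ, v ⬝ᵥ (a x *ᵥ v) ≤ Λ * (v ⬝ᵥ v) := fun v => by
    simpa [← EuclideanSpace.dotProduct_self_eq_norm_sq, dotProduct, mulVec, Finset.mul_sum,
      mul_assoc] using ha (WithLp.toLp 2 v)
  rw [Lop_eq_trace_mul_add (isHermitian_iff_isSymm.1 hH.isHermitian)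
    (pd_pd_norm_rpow_mul_log hx0)]
  simp only [pd_norm_rpow_mul_log hx0, mul_left_comm (b x _), ← Finset.mul_sum]
  linarith [trace_mul_le_of_dotProduct_mulVec_le hs hq hH,
    mul_le_mul_of_nonneg_left (trace_psiHessian_le (zero_le_one.trans hd) hx) hΛ]

theorem Lop_norm_rpow_mul_log_nonpos {m : ℕ} {d Λ χ γ₁ γ₂ : ℝ} (hd : 1 ≤ d) (hΛ : 0 ≤ Λ)
    {a : E m → Matrix (Fin m) (Fin m) ℝ} {b : E m → E m} {x : E m} (hx : 1 ≤ ‖x‖)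
    (hs : (a x).IsSymm) (ha : ∀ ξ : E m, ∑ i, ∑ j, ξ i * a x i j * ξ j ≤ Λ * ‖ξ‖ ^ 2)
    (hb : ∑ i, b x i * x i ≤ γ₁ - γ₂ * ‖x‖ ^ χ)
    (hx_large : Λ * (2 * d - 2 + m) + γ₁ ≤ γ₂ * ‖x‖ ^ χ) :
    Lop a b (fun y => ‖y‖ ^ d * Real.log ‖y‖) x ≤ 0 :=
  (Lop_norm_rpow_mul_log_le hd hΛ hx hs ha).trans <| mul_nonpos_of_nonneg_of_nonpos
    (by linarith [psiProfileDeriv_nonneg (zero_le_one.trans hd) (one_le_pow₀ (n := 2) hx)])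
    (by linarith)

theorem tendsto_rpow_mul_log_atTop {d : ℝ} (hd : 0 < d) :
    Tendsto (fun r => r ^ d * Real.log r) atTop atTop :=
  (tendsto_rpow_atTop hd).atTop_mul_atTop₀ Real.tendsto_log_atTop

theorem abs_div_rpow_mul_log_le {u r C d : ℝ} (hC : 0 ≤ C) (hd : 0 ≤ d) (hr : 1 < r)
    (hu : |u| ≤ C * (1 + r ^ d)) : |u / (r ^ d * Real.log r)| ≤ 2 * C / Real.log r := by
  have hrd : 1 ≤ r ^ d := Real.one_le_rpow hr.le hd
  have hlog : 0 < Real.log r := Real.log_pos hr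
  rw [abs_div, abs_of_pos (mul_pos (zero_lt_one.trans_le hrd) hlog)]
  calc |u| / (r ^ d * Real.log r) ≤ 2 * C * r ^ d / (r ^ d * Real.log r) :=
        div_le_div_of_nonneg_right (by nlinarith) (by positivity)
    _ = 2 * C / Real.log r := by field_simp

theorem lyapunov_function_psi_general (m k : ℕ) (d : ℝ) (hd : 1 ≤ d)
    (A : Set (Ctl k))
    (a : E m → Ctl k → Matrix (Fin m) (Fin m) ℝ)
    (hasymm : ∀ x α, (a x α).IsSymm)
    (Lam : ℝ) (hLam : 0 < Lam)
    (ha : ∀ x ξ : E m, ∀ α ∈ A, ∑ i, ∑ j, ξ i * a x α i j * ξ j ≤ Lam * ‖ξ‖ ^ 2)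
    (b : E m → Ctl k → E m)
    (χ γ₁ γ₂ : ℝ) (hχ : 0 < χ) (hγ₂ : 0 < γ₂)
    (hb : ∀ x : E m, ∀ α ∈ A, ∑ i, b x α i * x i ≤ γ₁ - γ₂ * ‖x‖ ^ χ) :
    -- ψ(x) → +∞ as |x| → +∞
    (∀ M : ℝ, ∃ R : ℝ, ∀ x : E m, R ≤ ‖x‖ → M ≤ ‖x‖ ^ d * Real.log ‖x‖) ∧
    -- L ψ ≤ 0 outside a ball, for every α ∈ A
    (∃ R₀ : ℝ, 1 < R₀ ∧ ∀ x : E m, R₀ ≤ ‖x‖ → ∀ α ∈ A,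
      Lop (fun y => a y α) (fun y => b y α) (fun y => ‖y‖ ^ d * Real.log ‖y‖) x ≤ 0) ∧
    -- consequently `min_{α ∈ A} { -trace(a D²ψ) - b ⬝ ∇ψ } ≥ 0` outside that ball
    (∃ R₀ : ℝ, 1 < R₀ ∧ ∀ x : E m, R₀ ≤ ‖x‖ →
      ∀ v ∈ {v : ℝ | ∃ α ∈ A,
        v = -Lop (fun y => a y α) (fun y => b y α) (fun y => ‖y‖ ^ d * Real.log ‖y‖) x},
      0 ≤ v) ∧
    -- any function of growth `d` is negligible with respect to ψ at infinity
    ∀ (v : E m → ℝ) (C : ℝ), 0 < C → (∀ x : E m, |v x| ≤ C * (1 + ‖x‖ ^ d)) →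
      ∀ ε > (0 : ℝ), ∃ R : ℝ, ∀ x : E m, R ≤ ‖x‖ →
        |v x / (‖x‖ ^ d * Real.log ‖x‖)| < ε := by
  have hL : ∃ R₀ : ℝ, 1 < R₀ ∧ ∀ x : E m, R₀ ≤ ‖x‖ → ∀ α ∈ A,
      Lop (fun y => a y α) (fun y => b y α) (fun y => ‖y‖ ^ d * Real.log ‖y‖) x ≤ 0 := by
    obtain ⟨R, hR⟩ := eventually_atTop.1 <|
      ((tendsto_rpow_atTop hχ).const_mul_atTop hγ₂).eventually_ge_atTop
        (Lam * (2 * d - 2 + m) + γ₁)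
    exact ⟨max R 2, lt_max_of_lt_right one_lt_two, fun x hx α hα =>
      Lop_norm_rpow_mul_log_nonpos (a := fun y => a y α) hd hLam.le
        (one_le_two.trans ((le_max_right R 2).trans hx)) (hasymm x α) (fun ξ => ha x ξ α hα)
        (hb x α hα) (hR ‖x‖ (le_of_max_le_left hx))⟩
  refine ⟨fun M => ?_, hL, ?_, fun v C hC hv ε hε => ?_⟩
  · obtain ⟨R, hR⟩ := eventually_atTop.1 <|
      (tendsto_rpow_mul_log_atTop (zero_lt_one.trans_le hd)).eventually_ge_atTop M
    exact ⟨R, fun x hx => hR _ hx⟩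
  · obtain ⟨R₀, hR₀, hLR⟩ := hL
    exact ⟨R₀, hR₀, fun x hx v ⟨α, hα, hv⟩ => hv ▸ neg_nonneg.2 (hLR x hx α hα)⟩
  · obtain ⟨R, hR⟩ := eventually_atTop.1 <| (eventually_gt_atTop 1).and <|
      (tendsto_const_nhds.div_atTop Real.tendsto_log_atTop).eventually (gt_mem_nhds hε)
    refine ⟨R, fun x hx => ?_⟩
    obtain ⟨hx1, hxε⟩ := hR ‖x‖ hx
    exact (abs_div_rpow_mul_log_le hC.le (zero_le_one.trans hd) hx1 (hv x)).trans_lt hxε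

/-- the Lyapunov function `ψ(x) = |x|^d log |x|`.
Under the upper ellipticity bound on `a` and the dissipativity bound on `b`:
`ψ → +∞` at infinity; `trace(a D²ψ) + b ⬝ ∇ψ ≤ 0` outside a ball (so every value of the
minimized family `{-trace(a D²ψ) - b ⬝ ∇ψ : α ∈ A}` is nonnegative there); and every `v`
with `|v(x)| ≤ C (1 + |x|^d)` satisfies `v/ψ → 0` at infinity. -/
theorem lyapunov_function_psi (m k : ℕ) (hm : 1 ≤ m) (d : ℝ) (hd : 1 ≤ d)
    (A : Set (Ctl k)) (hAcp : IsCompact A)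
    (a : E m → Ctl k → Matrix (Fin m) (Fin m) ℝ)
    (hasymm : ∀ x α, (a x α).IsSymm)
    (Lam : ℝ) (hLam : 0 < Lam)
    (ha : ∀ x ξ : E m, ∀ α ∈ A, ∑ i, ∑ j, ξ i * a x α i j * ξ j ≤ Lam * ‖ξ‖ ^ 2)
    (b : E m → Ctl k → E m)
    (χ γ₁ γ₂ : ℝ) (hχ : 0 < χ) (hγ₁ : 0 < γ₁) (hγ₂ : 0 < γ₂)
    (hb : ∀ x : E m, ∀ α ∈ A, ∑ i, b x α i * x i ≤ γ₁ - γ₂ * ‖x‖ ^ χ) :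
    -- ψ(x) → +∞ as |x| → +∞
    (∀ M : ℝ, ∃ R : ℝ, ∀ x : E m, R ≤ ‖x‖ → M ≤ ‖x‖ ^ d * Real.log ‖x‖) ∧
    -- L ψ ≤ 0 outside a ball, for every α ∈ A
    (∃ R₀ : ℝ, 1 < R₀ ∧ ∀ x : E m, R₀ ≤ ‖x‖ → ∀ α ∈ A,
      Lop (fun y => a y α) (fun y => b y α) (fun y => ‖y‖ ^ d * Real.log ‖y‖) x ≤ 0) ∧
    -- consequently `min_{α ∈ A} { -trace(a D²ψ) - b ⬝ ∇ψ } ≥ 0` outside that ball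
    (∃ R₀ : ℝ, 1 < R₀ ∧ ∀ x : E m, R₀ ≤ ‖x‖ →
      ∀ v ∈ {v : ℝ | ∃ α ∈ A,
        v = -Lop (fun y => a y α) (fun y => b y α) (fun y => ‖y‖ ^ d * Real.log ‖y‖) x},
      0 ≤ v) ∧
    -- any function of growth `d` is negligible with respect to ψ at infinity
    ∀ (v : E m → ℝ) (C : ℝ), 0 < C → (∀ x : E m, |v x| ≤ C * (1 + ‖x‖ ^ d)) →
      ∀ ε > (0 : ℝ), ∃ R : ℝ, ∀ x : E m, R ≤ ‖x‖ →
        |v x / (‖x‖ ^ d * Real.log ‖x‖)| < ε :=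
  lyapunov_function_psi_general m k d hd A a hasymm Lam hLam ha b χ γ₁ γ₂ hχ hγ₂ hb
end
end
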